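/- arXiv:0912.0668 — 2 statements merged into one kernel-verified Lean document; each statement's English description precedes it below -/
import Mathlib

section
/- Let f₀, f₁ ∈ PL₀(I) be non-commuting, and suppose they satisfy both relations [f₀f₁⁻¹, f₀⁻¹f₁f₀] = 1 and [f₀f₁⁻¹, f₀⁻²f₁f₀²] = 1. Then the subgroup of PL₀(I) generated by f₀ and f₁ is isomorphic to Thompson's group F via an isomorphism carrying the standard generators x₀, x₁ to f₀, f₁. -/
open scoped commutatorElement

/-- The support of a permutation `f` of `ℝ` : the set of points moved by `f`. -/
def Supp (f : Equiv.Perm ℝ) : Set ℝ := {x : ℝ | f x ≠ x}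

/-- `IsPL0 f` says that `f` is (the extension by the identity on `ℝ \ [0,1]` of) a
piecewise-linear orientation-preserving homeomorphism of the unit interval `[0,1]`
with only finitely many breakpoints; this represents membership in `PL₀(I)`.
The finite set `B` collects the possible points of non-differentiability: away from
`B` the map is locally affine. -/
def IsPL0 (f : Equiv.Perm ℝ) : Prop :=
  StrictMono ⇑f ∧ (∀ x : ℝ, x ≤ 0 → f x = x) ∧ (∀ x : ℝ, 1 ≤ x → f x = x) ∧
    ∃ B : Finset ℝ, ∀ x : ℝ, x ∉ B → ∃ s t : ℝ, ∀ᶠ y in nhds x, f y = s * y + t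

/-- `IsOrbital f a b` : the open interval `(a,b)` is an orbital of `f`, i.e. a
connected component of `Supp f` (an open interval contained in the support whose
endpoints are fixed by `f`). -/
def IsOrbital (f : Equiv.Perm ℝ) (a b : ℝ) : Prop :=
  a < b ∧ Set.Ioo a b ⊆ Supp f ∧ f a = a ∧ f b = b

/-- The two defining relations `[f₀f₁⁻¹, f₁^{f₀}] = 1` and `[f₀f₁⁻¹, f₁^{f₀²}] = 1`
of Thompson's group `F`, for the pair `(f₀, f₁)`.  The paper composes in word order
(functions act on the right), so the paper's word `f₀f₁⁻¹` is the group element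
`f₁⁻¹ * f₀` in Mathlib's left-action convention, and the conjugate
`f₁^{f₀} = f₀⁻¹f₁f₀` is the element `f₀ * f₁ * f₀⁻¹`.  Recall `⁅a,b⁆ = 1 ↔ a*b = b*a`. -/
def ThompsonRel (f₀ f₁ : Equiv.Perm ℝ) : Prop :=
  ⁅f₁⁻¹ * f₀, f₀ * f₁ * f₀⁻¹⁆ = 1 ∧ ⁅f₁⁻¹ * f₀, f₀ ^ 2 * f₁ * (f₀ ^ 2)⁻¹⁆ = 1

/-- The relators of the standard finite presentation
`F ≅ ⟨x₀, x₁ | [x₀x₁⁻¹, x₁^{x₀}] = [x₀x₁⁻¹, x₁^{x₀²}] = 1⟩` of Thompson's group `F`,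
written out with the paper's word-order (right-action) convention translated into
Mathlib's multiplication: the word `x₀x₁⁻¹` is `x₁⁻¹ * x₀` and `x₁^{x₀} = x₀⁻¹x₁x₀`
is `x₀ * x₁ * x₀⁻¹`. -/
def thompsonRels : Set (FreeGroup (Fin 2)) :=
  { ⁅(FreeGroup.of (1 : Fin 2))⁻¹ * FreeGroup.of (0 : Fin 2),
      FreeGroup.of (0 : Fin 2) * FreeGroup.of (1 : Fin 2) * (FreeGroup.of (0 : Fin 2))⁻¹⁆,
    ⁅(FreeGroup.of (1 : Fin 2))⁻¹ * FreeGroup.of (0 : Fin 2),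
      FreeGroup.of (0 : Fin 2) ^ 2 * FreeGroup.of (1 : Fin 2) *
        (FreeGroup.of (0 : Fin 2) ^ 2)⁻¹⁆ }

/-- Thompson's group `F`, given by its standard finite presentation. -/
abbrev ThompsonF : Type := PresentedGroup thompsonRels

/-!
The presentation turns `f₀, f₁` into a homomorphism `F → Perm ℝ` onto `⟨f₀, f₁⟩`, and it is
injective as soon as every nontrivial normal subgroup `N` of `F` contains `⁅x₀, x₁⁆`.

For the latter, `F` acts faithfully on `ℝ` by piecewise-linear maps, `xₙ` being the identity below
`n` and the translation by `1` above `n + 1`: every element is `p⁻¹ q` with `p, q` positive words,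
and the least index of a positive word is read off from its largest fixed point. Some `g ∈ N` moves
an interval `J = (t₀, g t₀)` off itself; as the orbit of `1` consists of all positive dyadics, any
pair `u, v` supported in a compact subinterval of `(0, ∞)` can be conjugated into `J`, and then
Higman's trick puts `⁅u, v⁆` in `N`. Finally `⁅x₀, x₁⁆ = w₁⁻¹` with `wₙ = xₙ xₙ₊₁⁻¹`, and
`w₁` is a product of conjugates of two such commutators.
-/

section GroupLemmas

variable {G : Type*} [Group G]

theorem conj_eq_conj_of_commute_inv_mul {a b c : G} (h : Commute (b⁻¹ * a) c) :
    b * c * b⁻¹ = a * c * a⁻¹ := by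
  have hc : (b⁻¹ * a) * c * (b⁻¹ * a)⁻¹ = c := by rw [h.eq]; group
  calc b * c * b⁻¹ = b * ((b⁻¹ * a) * c * (b⁻¹ * a)⁻¹) * b⁻¹ := by rw [hc]
    _ = a * c * a⁻¹ := by group

theorem commute_inv_mul_of_conj_eq_conj {a b c : G} (h : b * c * b⁻¹ = a * c * a⁻¹) :
    Commute (b⁻¹ * a) c := by
  have hc : c = b⁻¹ * (a * c * a⁻¹) * b := by rw [← h]; group
  unfold Commute SemiconjBy
  nth_rewrite 2 [hc]
  group

/-- Higman's trick: `⁅⁅h, u⁆, v⁆ = ⁅u⁻¹, v⁆`. -/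
theorem commutatorElement_inv_mem_of_commute {N : Subgroup G} [N.Normal] {h u v : G}
    (hh : h ∈ N) (hu : Commute (h * u * h⁻¹) u) (hv : Commute (h * u * h⁻¹) v) :
    ⁅u⁻¹, v⁆ ∈ N := by
  set c := h * u * h⁻¹
  have hz : c * (u⁻¹ * v * u) * c⁻¹ = u⁻¹ * v * u := by
    rw [((hu.inv_right.mul_right hv).mul_right hu).eq]; group
  have hid : ⁅⁅h, u⁆, v⁆ = ⁅u⁻¹, v⁆ := by
    calc ⁅⁅h, u⁆, v⁆ = (c * (u⁻¹ * v * u) * c⁻¹) * v⁻¹ := by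
          simp only [commutatorElement_def, c]; group
      _ = ⁅u⁻¹, v⁆ := by rw [hz, commutatorElement_def]; group
  rw [← hid]
  exact Subgroup.commutator_le_left N ⊤ <| Subgroup.commutator_mem_commutator
    (Subgroup.commutator_le_left N ⊤ (Subgroup.commutator_mem_commutator hh trivial)) trivial

theorem pow_mul_mul_pow_inv_eq_of_mul_eq (y : ℕ → G)
    (hy : ∀ k n, k < n → y k * y n = y (n + 1) * y k) (n : ℕ) :
    y 0 ^ n * y 1 * (y 0 ^ n)⁻¹ = y (n + 1) := by
  induction n with
  | zero => simp
  | succ n ih =>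
    calc y 0 ^ (n + 1) * y 1 * (y 0 ^ (n + 1))⁻¹
        = y 0 * (y 0 ^ n * y 1 * (y 0 ^ n)⁻¹) * (y 0)⁻¹ := by group
      _ = y (n + 2) := by rw [ih, hy 0 (n + 1) (by omega)]; group

theorem thompson_relations_of_mul_eq (y : ℕ → G)
    (hy : ∀ k n, k < n → y k * y n = y (n + 1) * y k) :
    ⁅(y 1)⁻¹ * y 0, y 0 * y 1 * (y 0)⁻¹⁆ = 1 ∧
      ⁅(y 1)⁻¹ * y 0, y 0 ^ 2 * y 1 * (y 0 ^ 2)⁻¹⁆ = 1 := by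
  have hcomm : ∀ n, 2 ≤ n → Commute ((y 1)⁻¹ * y 0) (y n) := fun n hn =>
    commute_inv_mul_of_conj_eq_conj <| by
      rw [hy 1 n (by omega), hy 0 n (by omega)]; group
  have h₁ := pow_mul_mul_pow_inv_eq_of_mul_eq y hy 1
  have h₂ := pow_mul_mul_pow_inv_eq_of_mul_eq y hy 2
  rw [pow_one] at h₁
  rw [h₁, h₂, commutatorElement_eq_one_iff_mul_comm, commutatorElement_eq_one_iff_mul_comm]
  exact ⟨(hcomm 2 le_rfl).eq, (hcomm 3 (by norm_num)).eq⟩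

end GroupLemmas

theorem Equiv.Perm.strictMono_inv {α : Type*} [LinearOrder α] {f : Equiv.Perm α}
    (hf : StrictMono f) : StrictMono ⇑f⁻¹ :=
  fun a b hab => hf.lt_iff_lt.mp (by simpa using hab)

theorem supp_inv (f : Equiv.Perm ℝ) : Supp f⁻¹ = Supp f := by
  ext t
  simp only [Supp, Set.mem_ofPred_eq, not_congr Equiv.Perm.inv_eq_iff_eq, ne_comm]

theorem supp_conj (g u : Equiv.Perm ℝ) : Supp (g * u * g⁻¹) = g '' Supp u := by
  ext t
  rw [Equiv.image_eq_preimage_symm]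
  simp only [Supp, Set.mem_preimage, Set.mem_ofPred_eq, Equiv.Perm.mul_apply, ne_eq,
    ← Equiv.Perm.eq_inv_iff_eq]
  rfl

theorem commute_of_disjoint_supp {u v : Equiv.Perm ℝ} (h : Disjoint (Supp u) (Supp v)) :
    Commute u v :=
  Equiv.Perm.Disjoint.commute fun t => by
    by_contra! ht
    exact h.ne_of_mem ht.1 ht.2 rfl

theorem supp_subset_of_forall_apply_eq {f : Equiv.Perm ℝ} {s : Set ℝ}
    (h : ∀ t ∉ s, f t = t) : Supp f ⊆ s :=
  fun t ht => by_contra fun hts => ht (h t hts)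

theorem apply_eq_of_supp_subset {f : Equiv.Perm ℝ} {s : Set ℝ} (h : Supp f ⊆ s) {t : ℝ}
    (ht : t ∉ s) : f t = t :=
  not_not.mp fun hne => ht (h hne)

namespace ThompsonF

section Lift

variable {G : Type*} [Group G]

def lift (g₀ g₁ : G) (h₁ : ⁅g₁⁻¹ * g₀, g₀ * g₁ * g₀⁻¹⁆ = 1)
    (h₂ : ⁅g₁⁻¹ * g₀, g₀ ^ 2 * g₁ * (g₀ ^ 2)⁻¹⁆ = 1) : ThompsonF →* G :=
  PresentedGroup.toGroup (f := ![g₀, g₁]) <| by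
    rintro r (rfl | rfl) <;>
      simpa only [map_commutatorElement, map_mul, map_inv, map_pow, FreeGroup.lift_apply_of,
        Matrix.cons_val_zero, Matrix.cons_val_one]

variable {g₀ g₁ : G} {h₁ : ⁅g₁⁻¹ * g₀, g₀ * g₁ * g₀⁻¹⁆ = 1}
  {h₂ : ⁅g₁⁻¹ * g₀, g₀ ^ 2 * g₁ * (g₀ ^ 2)⁻¹⁆ = 1}

@[simp]
theorem lift_of_zero : lift g₀ g₁ h₁ h₂ (PresentedGroup.of 0) = g₀ := by
  simp [lift, PresentedGroup.toGroup.of]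

@[simp]
theorem lift_of_one : lift g₀ g₁ h₁ h₂ (PresentedGroup.of 1) = g₁ := by
  simp [lift, PresentedGroup.toGroup.of]

theorem range_lift : (lift g₀ g₁ h₁ h₂).range = Subgroup.closure {g₀, g₁} := by
  rw [MonoidHom.range_eq_map, ← PresentedGroup.closure_range_of, MonoidHom.map_closure,
    ← Set.range_comp]
  congr 1
  ext g
  simp [Fin.exists_fin_two, eq_comm]

end Lift

def x : ℕ → ThompsonF
  | 0 => PresentedGroup.of 0
  | n + 1 => PresentedGroup.of 0 ^ n * PresentedGroup.of 1 * (PresentedGroup.of 0 ^ n)⁻¹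

theorem x_zero_conj {n : ℕ} (hn : 1 ≤ n) : x 0 * x n * (x 0)⁻¹ = x (n + 1) := by
  obtain ⟨m, rfl⟩ := Nat.exists_eq_add_of_le' hn
  simp only [x, pow_succ']
  group

theorem x_zero : x 0 = PresentedGroup.of 0 := rfl

theorem x_one : x 1 = PresentedGroup.of 1 := by simp [x]

theorem mk_of_zero : PresentedGroup.mk thompsonRels (FreeGroup.of 0) = x 0 := rfl

theorem mk_of_one : PresentedGroup.mk thompsonRels (FreeGroup.of 1) = x 1 := x_one.symm

theorem x_one_conj_x_two : x 1 * x 2 * (x 1)⁻¹ = x 3 := by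
  have h := PresentedGroup.one_of_mem (rels := thompsonRels) (Set.mem_insert _ _)
  simp only [map_commutatorElement, map_mul, map_inv, mk_of_zero, mk_of_one,
    x_zero_conj le_rfl] at h
  rw [conj_eq_conj_of_commute_inv_mul (commutatorElement_eq_one_iff_mul_comm.mp h)]
  exact x_zero_conj (by norm_num)

theorem x_one_conj_x_three : x 1 * x 3 * (x 1)⁻¹ = x 4 := by
  have hx3 : x 0 ^ 2 * x 1 * (x 0 ^ 2)⁻¹ = x 3 := by
    rw [← x_zero_conj (n := 2) (by norm_num), ← x_zero_conj (n := 1) le_rfl, sq]; group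
  have h := PresentedGroup.one_of_mem (rels := thompsonRels) (Set.mem_insert_of_mem _ rfl)
  simp only [map_commutatorElement, map_mul, map_inv, map_pow, mk_of_zero, mk_of_one, hx3] at h
  rw [conj_eq_conj_of_commute_inv_mul (commutatorElement_eq_one_iff_mul_comm.mp h)]
  exact x_zero_conj (by norm_num)

/-- Conjugating by `x₀` shifts every relation `xₖ xₙ xₖ⁻¹ = xₙ₊₁` with `1 ≤ k`. -/
theorem x_conj_succ {k n : ℕ} (hk : 1 ≤ k) (hkn : k < n)
    (h : x k * x n * (x k)⁻¹ = x (n + 1)) :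
    x (k + 1) * x (n + 1) * (x (k + 1))⁻¹ = x (n + 2) := by
  rw [← x_zero_conj hk, ← x_zero_conj (by omega : 1 ≤ n), ← x_zero_conj (by omega : 1 ≤ n + 1),
    ← h]
  group

theorem x_one_conj {n : ℕ} (hn : 2 ≤ n) : x 1 * x n * (x 1)⁻¹ = x (n + 1) := by
  induction n using Nat.strong_induction_on with
  | _ n ih =>
    match n, hn with
    | 2, _ => exact x_one_conj_x_two
    | 3, _ => exact x_one_conj_x_three
    | m + 4, _ =>
      have h₂ : x 2 * x (m + 3) * (x 2)⁻¹ = x (m + 4) :=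
        x_conj_succ le_rfl (by omega) (ih (m + 2) (by omega) (by omega))
      have h₃ : x 3 * x (m + 4) * (x 3)⁻¹ = x (m + 5) :=
        x_conj_succ (by omega) (by omega) h₂
      calc x 1 * x (m + 4) * (x 1)⁻¹
          = (x 1 * x 2 * (x 1)⁻¹) * (x 1 * x (m + 3) * (x 1)⁻¹) * (x 1 * x 2 * (x 1)⁻¹)⁻¹ := by
            rw [← h₂]; group
        _ = x (m + 5) := by rw [x_one_conj_x_two, ih (m + 3) (by omega) (by omega), h₃]

theorem x_conj {k n : ℕ} (h : k < n) : x k * x n * (x k)⁻¹ = x (n + 1) := by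
  induction k generalizing n with
  | zero => exact x_zero_conj h
  | succ k ih =>
    rcases k with _ | k
    · exact x_one_conj h
    · obtain ⟨n, rfl⟩ : ∃ n', n = n' + 1 := ⟨n - 1, by omega⟩
      exact x_conj_succ (by omega) (by omega) (ih (by omega))

theorem x_mul_x_of_lt {k n : ℕ} (h : k < n) : x k * x n = x (n + 1) * x k := by
  rw [← x_conj h]; group

def posWord (L : List ℕ) : ThompsonF := (L.map x).prod

@[simp]
theorem posWord_nil : posWord [] = 1 := rfl

@[simp]
theorem posWord_cons (i : ℕ) (L : List ℕ) : posWord (i :: L) = x i * posWord L := by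
  simp [posWord]

@[simp]
theorem posWord_append (L M : List ℕ) : posWord (L ++ M) = posWord L * posWord M := by
  simp [posWord]

theorem exists_x_mul_posWord {k : ℕ} (M : List ℕ) (hM : ∀ a ∈ M, k ≤ a) :
    ∃ M' : List ℕ, M'.length = M.length ∧ x k * posWord M = posWord M' * x k := by
  induction M with
  | nil => exact ⟨[], rfl, by simp⟩
  | cons i M ih =>
    obtain ⟨M', hlen, hM'⟩ := ih fun a ha => hM a (List.mem_cons_of_mem _ ha)
    rcases (hM i List.mem_cons_self).eq_or_lt with rfl | hki
    · refine ⟨k :: M', by simp [hlen], ?_⟩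
      rw [posWord_cons, posWord_cons, ← mul_assoc, mul_assoc (x k) (x k), hM']; group
    · refine ⟨(i + 1) :: M', by simp [hlen], ?_⟩
      rw [posWord_cons, posWord_cons, ← mul_assoc, x_mul_x_of_lt hki, mul_assoc, hM']; group

theorem exists_posWord_eq_mul_x_of_forall_le {k : ℕ} (L : List ℕ) (hk : k ∈ L)
    (hmin : ∀ a ∈ L, k ≤ a) :
    ∃ L' : List ℕ, L'.length + 1 = L.length ∧ posWord L = posWord L' * x k := by
  induction L with
  | nil => simp at hk
  | cons i L ih =>
    by_cases hik : i = k
    · subst hik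
      obtain ⟨L', hlen, hL'⟩ :=
        exists_x_mul_posWord L fun a ha => hmin a (List.mem_cons_of_mem _ ha)
      exact ⟨L', by simp [hlen], by rw [posWord_cons, hL']⟩
    · obtain ⟨L', hlen, hL'⟩ := ih ((List.mem_cons.mp hk).resolve_left (Ne.symm hik))
        fun a ha => hmin a (List.mem_cons_of_mem _ ha)
      exact ⟨i :: L', by simp [hlen], by rw [posWord_cons, hL', posWord_cons, mul_assoc]⟩

theorem exists_posWord_mul_posWord_eq_mul_x (L : List ℕ) (m : ℕ) :
    ∃ A B : List ℕ, posWord A * posWord L = posWord B * x m := by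
  induction L using List.reverseRecOn generalizing m with
  | nil => exact ⟨[m], [], by simp⟩
  | append_singleton L i ih =>
    rcases lt_trichotomy m i with hmi | rfl | hmi
    · obtain ⟨A, B, hAB⟩ := ih m
      refine ⟨A, B ++ [i + 1], ?_⟩
      simp only [posWord_append, posWord_cons, posWord_nil, mul_one]
      rw [← mul_assoc, hAB, mul_assoc, x_mul_x_of_lt hmi, ← mul_assoc]
    · exact ⟨[], L, by simp⟩
    · obtain ⟨A, B, hAB⟩ := ih (m + 1)
      refine ⟨A, B ++ [i], ?_⟩
      simp only [posWord_append, posWord_cons, posWord_nil, mul_one]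
      rw [← mul_assoc, hAB, mul_assoc, ← x_mul_x_of_lt hmi, ← mul_assoc]

/-- The Ore condition for the monoid of positive words. -/
theorem exists_posWord_mul_posWord_eq (M L : List ℕ) :
    ∃ U V : List ℕ, posWord U * posWord L = posWord V * posWord M := by
  induction M using List.reverseRecOn generalizing L with
  | nil => exact ⟨[], L, by simp⟩
  | append_singleton M j ih =>
    obtain ⟨A, B, hAB⟩ := exists_posWord_mul_posWord_eq_mul_x L j
    obtain ⟨U, V, hUV⟩ := ih B
    refine ⟨U ++ A, V, ?_⟩
    simp only [posWord_append, posWord_cons, posWord_nil, mul_one]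
    rw [mul_assoc, hAB, ← mul_assoc, hUV, mul_assoc]

theorem exists_eq_inv_posWord_mul_posWord (g : ThompsonF) :
    ∃ L M : List ℕ, g = (posWord L)⁻¹ * posWord M := by
  have hg : g ∈ Subgroup.closure (Set.range PresentedGroup.of) := by
    rw [PresentedGroup.closure_range_of]; trivial
  induction hg using Subgroup.closure_induction with
  | mem _ h =>
    obtain ⟨i, rfl⟩ := h
    refine ⟨[], [i], ?_⟩
    fin_cases i <;> simp [x]
  | one => exact ⟨[], [], by simp⟩
  | inv _ _ ih =>
    obtain ⟨L, M, rfl⟩ := ih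
    exact ⟨M, L, by group⟩
  | mul _ _ _ _ ih ih' =>
    obtain ⟨L, M, rfl⟩ := ih
    obtain ⟨L', M', rfl⟩ := ih'
    obtain ⟨U, V, hUV⟩ := exists_posWord_mul_posWord_eq M L'
    have hM : posWord M * (posWord L')⁻¹ = (posWord V)⁻¹ * posWord U := by
      rw [eq_inv_mul_iff_mul_eq, ← mul_assoc, ← hUV]; group
    refine ⟨V ++ L, U ++ M', ?_⟩
    calc (posWord L)⁻¹ * posWord M * ((posWord L')⁻¹ * posWord M')
        = (posWord L)⁻¹ * (posWord M * (posWord L')⁻¹) * posWord M' := by group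
      _ = _ := by rw [hM, posWord_append, posWord_append]; group

/-- `xₙ` acts on `ℝ` as the identity below `n`, with slope `2` on `[n, n + 1]`, and as the
translation by `1` above `n + 1`. -/
noncomputable def modelFun (n : ℕ) (t : ℝ) : ℝ :=
  if t ≤ n then t else if t ≤ n + 1 then 2 * t - n else t + 1

noncomputable def modelInvFun (n : ℕ) (t : ℝ) : ℝ :=
  if t ≤ n then t else if t ≤ n + 2 then (t + n) / 2 else t - 1

noncomputable def modelGen (n : ℕ) : Equiv.Perm ℝ where
  toFun := modelFun n
  invFun := modelInvFun n
  left_inv t := by unfold modelFun modelInvFun; split_ifs <;> linarith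
  right_inv t := by unfold modelFun modelInvFun; split_ifs <;> linarith

section ModelGen

variable {n : ℕ} {t : ℝ}

theorem modelGen_apply_of_le (h : t ≤ n) : modelGen n t = t := by
  simp [modelGen, modelFun, h]

theorem modelGen_apply_of_mem_Icc (h₁ : n ≤ t) (h₂ : t ≤ n + 1) : modelGen n t = 2 * t - n := by
  simp only [modelGen, Equiv.coe_fn_mk, modelFun]; split_ifs <;> linarith

theorem modelGen_apply_of_ge (h : n + 1 ≤ t) : modelGen n t = t + 1 := by
  simp only [modelGen, Equiv.coe_fn_mk, modelFun]; split_ifs <;> linarith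

theorem modelGen_inv_apply_of_le (h : t ≤ n) : (modelGen n)⁻¹ t = t := by
  simp [modelGen, modelInvFun, h]

theorem modelGen_inv_apply_of_mem_Icc (h₁ : n ≤ t) (h₂ : t ≤ n + 2) :
    (modelGen n)⁻¹ t = (t + n) / 2 := by
  simp only [modelGen, Equiv.Perm.coe_inv, Equiv.coe_fn_symm_mk, modelInvFun]
  split_ifs <;> linarith

theorem modelGen_inv_apply_of_ge (h : n + 2 ≤ t) : (modelGen n)⁻¹ t = t - 1 := by
  simp only [modelGen, Equiv.Perm.coe_inv, Equiv.coe_fn_symm_mk, modelInvFun]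
  split_ifs <;> linarith

theorem modelGen_strictMono (n : ℕ) : StrictMono (modelGen n) := by
  intro a b hab
  simp only [modelGen, Equiv.coe_fn_mk, modelFun]; split_ifs <;> linarith

theorem le_modelGen_apply (n : ℕ) (t : ℝ) : t ≤ modelGen n t := by
  simp only [modelGen, Equiv.coe_fn_mk, modelFun]; split_ifs <;> linarith

theorem lt_modelGen_apply (h : n < t) : t < modelGen n t := by
  simp only [modelGen, Equiv.coe_fn_mk, modelFun]; split_ifs <;> linarith

theorem modelGen_mul_modelGen {k : ℕ} (h : k < n) :
    modelGen k * modelGen n = modelGen (n + 1) * modelGen k := by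
  have hk : (k : ℝ) + 1 ≤ n := by exact_mod_cast h
  ext t
  simp only [Equiv.Perm.mul_apply, modelGen, Equiv.coe_fn_mk, modelFun]
  push_cast
  split_ifs <;> linarith

end ModelGen

noncomputable def model : ThompsonF →* Equiv.Perm ℝ :=
  lift (modelGen 0) (modelGen 1)
    (thompson_relations_of_mul_eq modelGen fun _ _ => modelGen_mul_modelGen).1
    (thompson_relations_of_mul_eq modelGen fun _ _ => modelGen_mul_modelGen).2

@[simp]
theorem model_x (n : ℕ) : model (x n) = modelGen n := by
  rcases n with _ | n
  · exact lift_of_zero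
  · simp only [x, map_mul, map_inv, map_pow, model, lift_of_zero, lift_of_one]
    exact pow_mul_mul_pow_inv_eq_of_mul_eq modelGen (fun _ _ => modelGen_mul_modelGen) n

theorem model_x_zero_apply {t : ℝ} (h₀ : 0 ≤ t) (h₁ : t ≤ 1) : model (x 0) t = 2 * t := by
  rw [model_x, modelGen_apply_of_mem_Icc (by simpa) (by simpa)]; simp

theorem model_x_zero_inv_apply {t : ℝ} (h₀ : 0 ≤ t) (h₂ : t ≤ 2) : model (x 0)⁻¹ t = t / 2 := by
  rw [map_inv, model_x, modelGen_inv_apply_of_mem_Icc (by simpa) (by simpa)]; simp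

theorem model_x_zero_inv_apply_of_ge {t : ℝ} (h : 2 ≤ t) : model (x 0)⁻¹ t = t - 1 := by
  rw [map_inv, model_x, modelGen_inv_apply_of_ge (by simpa)]

theorem model_x_one_apply {t : ℝ} (h₁ : 1 ≤ t) (h₂ : t ≤ 2) : model (x 1) t = 2 * t - 1 := by
  rw [model_x, modelGen_apply_of_mem_Icc (by simpa) (by norm_num; linarith)]; simp

theorem model_mem_closure (g : ThompsonF) :
    model g ∈ Subgroup.closure {modelGen 0, modelGen 1} := by
  have hg : model g ∈ model.range := ⟨g, rfl⟩
  rwa [model, range_lift] at hg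

theorem model_strictMono (g : ThompsonF) : StrictMono (model g) := by
  have hg := model_mem_closure g
  generalize model g = f at hg ⊢
  induction hg using Subgroup.closure_induction with
  | mem _ h => rcases h with rfl | rfl <;> exact modelGen_strictMono _
  | one => exact strictMono_id
  | mul _ _ _ _ hf hg => exact hf.comp hg
  | inv _ _ hf => exact Equiv.Perm.strictMono_inv hf

theorem model_apply_of_nonpos (g : ThompsonF) {t : ℝ} (ht : t ≤ 0) : model g t = t := by
  have hle : Subgroup.closure {modelGen 0, modelGen 1} ≤
      fixingSubgroup (Equiv.Perm ℝ) (Set.Iic (0 : ℝ)) := by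
    rw [Subgroup.closure_le]
    rintro _ (rfl | rfl) <;> exact fun s => modelGen_apply_of_le (s.2.trans (by simp))
  exact (mem_fixingSubgroup_iff _).mp (hle (model_mem_closure g)) t ht

theorem model_posWord_apply_of_forall_le {L : List ℕ} {t : ℝ} (h : ∀ i ∈ L, t ≤ i) :
    model (posWord L) t = t := by
  induction L with
  | nil => simp
  | cons i L ih =>
    rw [posWord_cons, map_mul, Equiv.Perm.mul_apply, ih fun j hj => h j (List.mem_cons_of_mem _ hj),
      model_x, modelGen_apply_of_le (h i List.mem_cons_self)]

theorem le_model_posWord_apply (L : List ℕ) (t : ℝ) : t ≤ model (posWord L) t := by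
  induction L generalizing t with
  | nil => simp
  | cons i L ih =>
    rw [posWord_cons, map_mul, Equiv.Perm.mul_apply, model_x]
    exact (ih t).trans (le_modelGen_apply i _)

theorem lt_model_posWord_apply {L : List ℕ} {i : ℕ} {t : ℝ} (hi : i ∈ L) (ht : i < t) :
    t < model (posWord L) t := by
  induction L generalizing t with
  | nil => simp at hi
  | cons j L ih =>
    rw [posWord_cons, map_mul, Equiv.Perm.mul_apply, model_x]
    rcases List.mem_cons.mp hi with rfl | hi
    · exact (le_model_posWord_apply L t).trans_lt
        (lt_modelGen_apply (ht.trans_le (le_model_posWord_apply L t)))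
    · exact (ih hi ht).trans_le (le_modelGen_apply j _)

theorem le_of_model_posWord_eq {L M : List ℕ} (h : model (posWord L) = model (posWord M))
    {k k' : ℕ} (hk : k ∈ L) (hk' : ∀ a ∈ M, k' ≤ a) : k' ≤ k := by
  by_contra! hlt
  have hfix := model_posWord_apply_of_forall_le (t := (k' : ℝ)) fun a ha => by
    exact_mod_cast hk' a ha
  rw [← h] at hfix
  exact (lt_model_posWord_apply hk (by exact_mod_cast hlt)).ne' hfix

theorem model_posWord_ne_one {L : List ℕ} (hL : L ≠ []) : model (posWord L) ≠ 1 := fun h => by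
  simpa [h] using lt_model_posWord_apply (List.min_mem hL) (lt_add_one (_ : ℝ))

theorem posWord_eq_of_model_eq {L M : List ℕ} (h : model (posWord L) = model (posWord M)) :
    posWord L = posWord M := by
  induction hn : L.length + M.length using Nat.strong_induction_on generalizing L M with
  | _ n ih =>
    rcases eq_or_ne L [] with rfl | hL <;> rcases eq_or_ne M [] with rfl | hM
    · rfl
    · exact absurd h.symm (by simpa using model_posWord_ne_one hM)
    · exact absurd h (by simpa using model_posWord_ne_one hL)
    · have hmin : L.min hL = M.min hM :=
        le_antisymm (le_of_model_posWord_eq h.symm (List.min_mem hM) fun _ => List.min_le_of_mem)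
          (le_of_model_posWord_eq h (List.min_mem hL) fun _ => List.min_le_of_mem)
      obtain ⟨L₁, hL₁, hL₁'⟩ := exists_posWord_eq_mul_x_of_forall_le L (List.min_mem hL)
        fun _ => List.min_le_of_mem
      obtain ⟨M₁, hM₁, hM₁'⟩ := exists_posWord_eq_mul_x_of_forall_le M (List.min_mem hM)
        fun _ => List.min_le_of_mem
      rw [hL₁', hM₁', hmin, map_mul, map_mul, mul_left_inj] at h
      rw [hL₁', hM₁', hmin, ih _ (by omega) h rfl]

theorem model_injective : Function.Injective model := by
  rw [injective_iff_map_eq_one]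
  intro g hg
  obtain ⟨L, M, rfl⟩ := exists_eq_inv_posWord_mul_posWord g
  rw [map_mul, map_inv, inv_mul_eq_one] at hg
  rw [posWord_eq_of_model_eq hg, inv_mul_cancel]

def w (n : ℕ) : ThompsonF := x n * (x (n + 1))⁻¹

theorem model_w_apply (n : ℕ) (t : ℝ) :
    model (w n) t = modelFun n (modelInvFun (n + 1) t) := by
  simp only [w, map_mul, map_inv, Equiv.Perm.mul_apply, model_x]
  rfl

theorem model_w_inv_apply (n : ℕ) (t : ℝ) :
    model (w n)⁻¹ t = modelFun (n + 1) (modelInvFun n t) := by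
  simp only [w, mul_inv_rev, inv_inv, map_mul, map_inv, Equiv.Perm.mul_apply, model_x]
  rfl

theorem supp_model_w_subset (n : ℕ) : Supp (model (w n)) ⊆ Set.Icc (n : ℝ) (n + 3) := by
  intro t ht
  by_contra hmem
  rw [Set.mem_Icc, not_and_or, not_le, not_le] at hmem
  apply ht
  rw [model_w_apply]
  unfold modelFun modelInvFun
  push_cast
  rcases hmem with h | h <;> split_ifs <;> linarith

theorem model_w_zero_apply {t : ℝ} (h₀ : 0 ≤ t) (h₁ : t ≤ 1) : model (w 0) t = 2 * t := by
  rw [model_w_apply]; unfold modelFun modelInvFun; push_cast; split_ifs <;> linarith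

theorem model_w_zero_inv_apply {t : ℝ} (h₀ : 0 ≤ t) (h₂ : t ≤ 2) : model (w 0)⁻¹ t = t / 2 := by
  rw [model_w_inv_apply]; unfold modelFun modelInvFun; push_cast; split_ifs <;> linarith

theorem model_w_one_inv_apply {t : ℝ} (h₁ : 1 ≤ t) (h₃ : t ≤ 3) :
    model (w 1)⁻¹ t = (t + 1) / 2 := by
  rw [model_w_inv_apply]; unfold modelFun modelInvFun; push_cast; split_ifs <;> linarith

theorem model_pow_apply (g : ThompsonF) (k : ℕ) (t : ℝ) :
    model (g ^ (k + 1)) t = model g (model (g ^ k) t) := by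
  rw [pow_succ', map_mul, Equiv.Perm.mul_apply]

theorem model_x_zero_inv_pow_apply_le_one (m : ℕ) {t : ℝ} (ht : t ≤ m + 1) :
    model ((x 0)⁻¹ ^ m) t ≤ 1 := by
  induction m generalizing t with
  | zero => simpa using ht
  | succ m ih =>
    rw [pow_succ, map_mul, Equiv.Perm.mul_apply]
    refine ih ?_
    calc model (x 0)⁻¹ t ≤ model (x 0)⁻¹ (m + 2) := (model_strictMono _).monotone (by
            push_cast at ht; linarith)
      _ = m + 1 := by
        rw [map_inv, model_x, modelGen_inv_apply_of_ge (by push_cast; linarith)]; ring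

theorem exists_one_lt_model_w_zero_pow_apply {t : ℝ} (ht : 0 < t) :
    ∃ k : ℕ, 1 < model (w 0 ^ k) t := by
  by_contra! hle
  have hdouble : ∀ k : ℕ, model (w 0 ^ k) t = 2 ^ k * t := by
    intro k
    induction k with
    | zero => simp
    | succ k ih =>
      rw [model_pow_apply, ih, model_w_zero_apply (by positivity) (ih ▸ hle k), pow_succ]
      ring
  obtain ⟨k, hk⟩ := pow_unbounded_of_one_lt t⁻¹ one_lt_two
  have h := mul_lt_mul_of_pos_right hk ht
  rw [inv_mul_cancel₀ ht.ne', ← hdouble] at h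
  exact (hle k).not_gt h

theorem model_pow_apply_eq {g : ThompsonF} {t : ℝ} (ht : model g t = t) (k : ℕ) :
    model (g ^ k) t = t := by
  induction k with
  | zero => simp
  | succ k ih => rw [model_pow_apply, ih, ht]

theorem model_w_one_inv_pow_apply (j : ℕ) {t : ℝ} (h₁ : 1 ≤ t) (h₃ : t ≤ 3) :
    model ((w 1)⁻¹ ^ j) t = 1 + (t - 1) / 2 ^ j := by
  induction j with
  | zero => simp
  | succ j ih =>
    have hj : (0 : ℝ) < 2 ^ j := by positivity
    have hle : (t - 1) / 2 ^ j ≤ 2 := by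
      rw [div_le_iff₀ hj]; nlinarith [one_le_pow₀ (one_le_two : (1 : ℝ) ≤ 2) (n := j)]
    have hnn : 0 ≤ (t - 1) / 2 ^ j := div_nonneg (sub_nonneg.2 h₁) hj.le
    rw [model_pow_apply, ih, model_w_one_inv_apply (by linarith) (by linarith), pow_succ]
    field_simp
    ring

/-- Shrink `[r, M]` into `(0, 1]` with `x₀⁻¹`, push it into `(1, 3)` with the doubling bump `w₀`,
then contract `(1, 3)` towards its fixed end `1` with `w₁⁻¹`. -/
theorem exists_model_mem_Ioo_one {r M e : ℝ} (hr : 0 < r) (hrM : r ≤ M) (he : 1 < e) :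
    ∃ ζ : ThompsonF, 1 < model ζ r ∧ model ζ M < e := by
  obtain ⟨m, hm⟩ := exists_nat_ge M
  set r₁ := model ((x 0)⁻¹ ^ m) r
  set M₁ := model ((x 0)⁻¹ ^ m) M
  have hr₁ : 0 < r₁ := by
    simpa only [model_apply_of_nonpos _ le_rfl] using model_strictMono ((x 0)⁻¹ ^ m) hr
  have hM₁ : M₁ ≤ 1 := model_x_zero_inv_pow_apply_le_one m (by linarith)
  obtain ⟨k, hk⟩ := exists_one_lt_model_w_zero_pow_apply hr₁
  set r₂ := model (w 0 ^ k) r₁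
  set M₂ := model (w 0 ^ k) M₁
  have hM₂ : M₂ < 3 := by
    have h3 : model (w 0) 3 = 3 := by rw [model_w_apply]; norm_num [modelFun, modelInvFun]
    rw [← model_pow_apply_eq h3 k]
    exact model_strictMono _ (by linarith)
  have hrM₂ : r₂ ≤ M₂ := (model_strictMono _).monotone ((model_strictMono _).monotone hrM)
  obtain ⟨j, hj⟩ := pow_unbounded_of_one_lt (2 / (e - 1)) one_lt_two
  refine ⟨(w 1)⁻¹ ^ j * w 0 ^ k * (x 0)⁻¹ ^ m, ?_, ?_⟩
  · simp only [map_mul, Equiv.Perm.mul_apply]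
    rw [model_w_one_inv_pow_apply j hk.le (by linarith)]
    have : 0 < (r₂ - 1) / 2 ^ j := by apply div_pos <;> [linarith; positivity]
    linarith
  · simp only [map_mul, Equiv.Perm.mul_apply]
    rw [model_w_one_inv_pow_apply j (by linarith) hM₂.le]
    rw [div_lt_iff₀ (by linarith)] at hj
    have : (M₂ - 1) / 2 ^ j < e - 1 := by
      rw [div_lt_iff₀ (by positivity)]; nlinarith
    linarith

theorem exists_model_apply_eq_one (k m : ℕ) (hm : 0 < m) :
    ∃ ζ : ThompsonF, model ζ (m / 2 ^ k) = 1 := by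
  have h2k : (0 : ℝ) < 2 ^ k := by positivity
  have h2k' := Nat.two_pow_pos k
  by_cases hbig : 2 * 2 ^ k ≤ m
  · obtain ⟨ζ, hζ⟩ := exists_model_apply_eq_one k (m - 2 ^ k) (by omega)
    have h2 : (2 : ℝ) ≤ m / 2 ^ k := by rw [le_div_iff₀ h2k]; exact_mod_cast hbig
    refine ⟨ζ * (x 0)⁻¹, ?_⟩
    rw [map_mul, Equiv.Perm.mul_apply, model_x_zero_inv_apply_of_ge h2]
    convert hζ using 2
    rw [Nat.cast_sub (by omega)]
    field_simp
    push_cast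
    ring
  obtain rfl | ⟨k, rfl⟩ : k = 0 ∨ ∃ j, k = j + 1 := by rcases k with _ | k <;> simp
  · exact ⟨1, by simp [show m = 1 by omega]⟩
  have hpow : 2 ^ (k + 1) = 2 ^ k * 2 := pow_succ 2 k
  by_cases hsmall : m ≤ 2 ^ (k + 1)
  · obtain ⟨ζ, hζ⟩ := exists_model_apply_eq_one k m hm
    have h1 : (m : ℝ) / 2 ^ (k + 1) ≤ 1 := by rw [div_le_one h2k]; exact_mod_cast hsmall
    refine ⟨ζ * x 0, ?_⟩
    rw [map_mul, Equiv.Perm.mul_apply, model_x_zero_apply (by positivity) h1]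
    convert hζ using 2
    rw [pow_succ]
    field_simp
  · obtain ⟨ζ, hζ⟩ := exists_model_apply_eq_one k (m - 2 ^ k) (by omega)
    have h1 : (1 : ℝ) ≤ m / 2 ^ (k + 1) := by
      rw [le_div_iff₀ h2k, one_mul]; exact_mod_cast (by omega : 2 ^ (k + 1) ≤ m)
    have h2 : (m : ℝ) / 2 ^ (k + 1) ≤ 2 := by
      rw [div_le_iff₀ h2k]; exact_mod_cast (by omega : m ≤ 2 * 2 ^ (k + 1))
    refine ⟨ζ * x 1, ?_⟩
    rw [map_mul, Equiv.Perm.mul_apply, model_x_one_apply h1 h2]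
    convert hζ using 2
    rw [Nat.cast_sub (by omega), pow_succ]
    field_simp
    push_cast
    ring
termination_by (k, m)
decreasing_by all_goals simp only [Prod.lex_def, true_and]; omega

theorem exists_dyadic_mem_Ioo {α β : ℝ} (hα : 0 < α) (hαβ : α < β) :
    ∃ k m : ℕ, 0 < m ∧ α < m / 2 ^ k ∧ m / 2 ^ k < β := by
  obtain ⟨k, hk⟩ := pow_unbounded_of_one_lt (β - α)⁻¹ one_lt_two
  have h2k : (0 : ℝ) < 2 ^ k := by positivity
  rw [inv_lt_iff_one_lt_mul₀ (by linarith)] at hk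
  refine ⟨k, ⌊α * 2 ^ k⌋₊ + 1, Nat.succ_pos _, ?_, ?_⟩
  · rw [lt_div_iff₀ h2k]
    exact_mod_cast Nat.lt_floor_add_one (α * 2 ^ k)
  · rw [div_lt_iff₀ h2k]
    push_cast
    nlinarith [Nat.floor_le (by positivity : 0 ≤ α * 2 ^ k)]

theorem exists_model_mem_Ioo {r M α β : ℝ} (hr : 0 < r) (hrM : r ≤ M) (hα : 0 < α)
    (hαβ : α < β) : ∃ ζ : ThompsonF, α < model ζ r ∧ model ζ M < β := by
  obtain ⟨k, m, hm, hαq, hqβ⟩ := exists_dyadic_mem_Ioo hα hαβ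
  obtain ⟨ζ, hζ⟩ := exists_model_apply_eq_one k m hm
  have he : 1 < model ζ β := hζ ▸ model_strictMono ζ hqβ
  obtain ⟨ζ', hr', hM'⟩ := exists_model_mem_Ioo_one hr hrM he
  refine ⟨ζ⁻¹ * ζ', ?_, ?_⟩ <;> simp only [map_mul, map_inv, Equiv.Perm.mul_apply]
  · calc α < m / 2 ^ k := hαq
      _ = (model ζ)⁻¹ 1 := by rw [← hζ]; simp
      _ < _ := Equiv.Perm.strictMono_inv (model_strictMono ζ) hr'
  · calc _ < (model ζ)⁻¹ (model ζ β) := Equiv.Perm.strictMono_inv (model_strictMono ζ) hM'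
      _ = β := by simp

theorem commute_of_disjoint_supp_model {a b : ThompsonF}
    (h : Disjoint (Supp (model a)) (Supp (model b))) : Commute a b :=
  model_injective <| by simpa only [map_mul] using (commute_of_disjoint_supp h).eq

theorem exists_mem_lt_model_apply {N : Subgroup ThompsonF} (hN : N ≠ ⊥) :
    ∃ g ∈ N, ∃ t, t < model g t := by
  obtain ⟨g, hgN, hg⟩ := N.bot_or_exists_ne_one.resolve_left hN
  obtain ⟨t, ht⟩ : ∃ t, model g t ≠ t := by
    by_contra! h
    exact hg (model_injective (by ext t; simp [h]))
  rcases ht.lt_or_gt with hlt | hgt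
  · exact ⟨g⁻¹, N.inv_mem hgN, model g t, by simpa using hlt⟩
  · exact ⟨g, hgN, t, hgt⟩

/-- An element `g ∈ N` moves some interval `J = (t₀, g t₀)` off itself; conjugating `u, v` into
`J`, Higman's trick applies to `g` and the conjugated pair. -/
theorem commutatorElement_mem_of_supp_subset {N : Subgroup ThompsonF} [N.Normal] (hN : N ≠ ⊥)
    {u v : ThompsonF} {r M : ℝ} (hr : 0 < r) (hrM : r ≤ M)
    (hu : Supp (model u) ⊆ Set.Icc r M) (hv : Supp (model v) ⊆ Set.Icc r M) : ⁅u, v⁆ ∈ N := by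
  obtain ⟨g, hgN, t₀, ht₀⟩ := exists_mem_lt_model_apply hN
  have ht₀pos : 0 < t₀ := by
    by_contra! h
    exact ht₀.ne' (model_apply_of_nonpos g h)
  obtain ⟨ζ, hζr, hζM⟩ := exists_model_mem_Ioo hr hrM ht₀pos ht₀
  have hJ : ∀ y : ThompsonF, Supp (model y) ⊆ Set.Icc r M →
      Supp (model (ζ * y * ζ⁻¹)) ⊆ Set.Ioo t₀ (model g t₀) := by
    intro y hy
    rw [map_mul, map_mul, map_inv, supp_conj]
    rintro _ ⟨t, ht, rfl⟩
    exact ⟨hζr.trans_le ((model_strictMono ζ).monotone (hy ht).1),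
      ((model_strictMono ζ).monotone (hy ht).2).trans_lt hζM⟩
  set u' := ζ * u⁻¹ * ζ⁻¹
  have hu' : Supp (model u') ⊆ Set.Ioo t₀ (model g t₀) := hJ _ (by rwa [map_inv, supp_inv])
  have hc : Supp (model (g * u' * g⁻¹)) ⊆ Set.Ioi (model g t₀) := by
    rw [map_mul, map_mul, map_inv, supp_conj]
    rintro _ ⟨t, ht, rfl⟩
    exact model_strictMono g (hu' ht).1
  have hcomm : ∀ y : ThompsonF, Supp (model y) ⊆ Set.Ioo t₀ (model g t₀) →
      Commute (g * u' * g⁻¹) y := fun y hy =>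
    commute_of_disjoint_supp_model <| Set.disjoint_of_subset hc hy <|
      Set.disjoint_left.mpr fun _ h₁ h₂ => h₂.2.not_gt h₁
  have hmem := commutatorElement_inv_mem_of_commute hgN (hcomm _ hu') (hcomm _ (hJ v hv))
  have hconj : ⁅u'⁻¹, ζ * v * ζ⁻¹⁆ = ζ * ⁅u, v⁆ * ζ⁻¹ := by
    simp only [u', commutatorElement_def]; group
  rw [hconj] at hmem
  have h := ‹N.Normal›.conj_mem _ hmem ζ⁻¹
  rwa [show ζ⁻¹ * (ζ * ⁅u, v⁆ * ζ⁻¹) * ζ⁻¹⁻¹ = ⁅u, v⁆ by group] at h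

theorem supp_model_x_subset (m : ℕ) : Supp (model (x m)) ⊆ Set.Ioi (m : ℝ) :=
  supp_subset_of_forall_apply_eq fun _ ht => by
    rw [model_x, modelGen_apply_of_le (not_lt.mp ht)]

theorem x_conj_w {k n : ℕ} (h : k < n) : x k * w n * (x k)⁻¹ = w (n + 1) := by
  calc x k * w n * (x k)⁻¹ = (x k * x n * (x k)⁻¹) * (x k * x (n + 1) * (x k)⁻¹)⁻¹ := by
        simp only [w]; group
    _ = w (n + 1) := by rw [x_conj h, x_conj (by omega), w]

def smallBump : ThompsonF := (x 0 ^ 3)⁻¹ * w 0 * x 0 ^ 3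

theorem supp_model_smallBump_subset : Supp (model smallBump) ⊆ Set.Icc 0 (1 / 2) := by
  have h : smallBump = (x 0 ^ 3)⁻¹ * w 0 * ((x 0 ^ 3)⁻¹)⁻¹ := by rw [inv_inv]; rfl
  rw [h, map_mul, map_mul, map_inv model (x 0 ^ 3)⁻¹, supp_conj]
  rintro _ ⟨t, ht, rfl⟩
  have h3 : model (x 0 ^ 3)⁻¹ 3 = 1 / 2 := by
    simp only [pow_succ, pow_zero, one_mul, mul_inv_rev, map_mul, Equiv.Perm.mul_apply]
    rw [model_x_zero_inv_apply_of_ge (t := 3) (by norm_num),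
      model_x_zero_inv_apply_of_ge (t := 3 - 1) (by norm_num),
      model_x_zero_inv_apply (t := 3 - 1 - 1) (by norm_num) (by norm_num)]
    norm_num
  have hmono := (model_strictMono (x 0 ^ 3)⁻¹).monotone
  exact ⟨(model_apply_of_nonpos _ le_rfl).symm.trans_le
    (hmono (by simpa using (supp_model_w_subset 0 ht).1)),
    h3 ▸ hmono (by simpa using (supp_model_w_subset 0 ht).2)⟩

theorem model_smallBump_inv_apply {t : ℝ} (h₀ : 0 ≤ t) (h₁ : t ≤ 1 / 4) :
    model smallBump⁻¹ t = t / 2 := by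
  have e₁ : model (x 0 ^ 3) t = 8 * t := by
    simp only [pow_succ, pow_zero, one_mul, map_mul, Equiv.Perm.mul_apply]
    rw [model_x_zero_apply (t := t) h₀ (by linarith),
      model_x_zero_apply (t := 2 * t) (by linarith) (by linarith),
      model_x_zero_apply (t := 2 * (2 * t)) (by linarith) (by linarith)]
    ring
  have e₂ : model (x 0 ^ 3)⁻¹ (4 * t) = t / 2 := by
    simp only [pow_succ, pow_zero, one_mul, mul_inv_rev, map_mul, Equiv.Perm.mul_apply]
    rw [model_x_zero_inv_apply (t := 4 * t) (by linarith) (by linarith),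
      model_x_zero_inv_apply (t := 4 * t / 2) (by linarith) (by linarith),
      model_x_zero_inv_apply (t := 4 * t / 2 / 2) (by linarith) (by linarith)]
    ring
  rw [smallBump, mul_inv_rev, mul_inv_rev, inv_inv, map_mul, map_mul, Equiv.Perm.mul_apply,
    Equiv.Perm.mul_apply, e₁, model_w_zero_inv_apply (by linarith) (by linarith),
    show 8 * t / 2 = 4 * t by ring, e₂]

/-- `x₀`, corrected near `0` by `smallBump⁻¹` and near `∞` by `xₘ⁻¹` so as to be compactly
supported in `(0, ∞)`. -/
def compactX0 (m : ℕ) : ThompsonF := x 0 * smallBump⁻¹ * (x m)⁻¹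

theorem supp_model_compactX0_subset {m : ℕ} (hm : 1 ≤ m) :
    Supp (model (compactX0 m)) ⊆ Set.Icc (1 / 4) (m + 2) := by
  have hm' : (1 : ℝ) ≤ m := by exact_mod_cast hm
  refine supp_subset_of_forall_apply_eq fun t ht => ?_
  simp only [compactX0, map_mul, Equiv.Perm.mul_apply]
  rw [Set.mem_Icc, not_and_or, not_le, not_le] at ht
  rcases ht with ht | ht
  · rcases le_or_gt t 0 with h₀ | h₀
    · simp only [model_apply_of_nonpos _ h₀]
    · rw [map_inv model (x m), model_x m, modelGen_inv_apply_of_le (by linarith),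
        model_smallBump_inv_apply h₀.le ht.le, model_x_zero_apply (by linarith) (by linarith)]
      ring
  · have hfix : model smallBump⁻¹ (t - 1) = t - 1 := by
      refine apply_eq_of_supp_subset (s := Set.Icc 0 (1 / 2)) ?_ fun h => ?_
      · rw [map_inv, supp_inv]; exact supp_model_smallBump_subset
      · linarith [h.2]
    rw [map_inv model (x m), model_x m, modelGen_inv_apply_of_ge (by linarith), hfix, model_x,
      modelGen_apply_of_ge (by push_cast; linarith)]
    ring

theorem commute_x_w {m n : ℕ} (h : n + 3 ≤ m) : Commute (x m) (w n) :=
  commute_of_disjoint_supp_model <| Set.disjoint_of_subset (supp_model_x_subset m)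
    (supp_model_w_subset n) <| Set.disjoint_left.mpr fun t h₁ h₂ => by
      have : (n : ℝ) + 3 ≤ m := by exact_mod_cast h
      linarith [h₁.out, h₂.2]

theorem commute_smallBump_w {n : ℕ} (hn : 1 ≤ n) : Commute smallBump (w n) :=
  commute_of_disjoint_supp_model <| Set.disjoint_of_subset supp_model_smallBump_subset
    (supp_model_w_subset n) <| Set.disjoint_left.mpr fun t h₁ h₂ => by
      have : (1 : ℝ) ≤ n := by exact_mod_cast hn
      linarith [h₁.2, h₂.1]

theorem compactX0_conj_w {m n : ℕ} (hn : 1 ≤ n) (hm : n + 3 ≤ m) :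
    compactX0 m * w n * (compactX0 m)⁻¹ = w (n + 1) := by
  calc compactX0 m * w n * (compactX0 m)⁻¹
      = x 0 * (smallBump⁻¹ * ((x m)⁻¹ * w n * (x m)⁻¹⁻¹) * smallBump⁻¹⁻¹) * (x 0)⁻¹ := by
        simp only [compactX0]; group
    _ = w (n + 1) := by
      rw [(commute_x_w hm).inv_left.mul_inv_cancel,
        (commute_smallBump_w hn).inv_left.mul_inv_cancel, x_conj_w (by omega)]

theorem commutatorElement_of_zero_of_one_mem {N : Subgroup ThompsonF} [N.Normal] (hN : N ≠ ⊥) :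
    ⁅(PresentedGroup.of 0 : ThompsonF), PresentedGroup.of 1⁆ ∈ N := by
  have hstep : ∀ n : ℕ, 1 ≤ n → w (n + 1) * (w n)⁻¹ ∈ N := by
    intro n hn
    have hn' : (1 : ℝ) ≤ n := by exact_mod_cast hn
    have h := commutatorElement_mem_of_supp_subset hN (u := compactX0 (n + 3)) (v := w n)
      (r := 1 / 4) (M := n + 5) (by norm_num) (by linarith)
      ((supp_model_compactX0_subset (by omega)).trans
        (Set.Icc_subset_Icc le_rfl (by push_cast; linarith)))
      ((supp_model_w_subset n).trans (Set.Icc_subset_Icc (by linarith) (by linarith)))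
    rwa [commutatorElement_def, compactX0_conj_w hn le_rfl] at h
  have hw₁ : x 1 * w 1 * (x 1)⁻¹ = w 1 * w 2 := by
    calc x 1 * w 1 * (x 1)⁻¹ = x 1 * (x 1 * x 2 * (x 1)⁻¹)⁻¹ := by simp only [w]; group
      _ = w 1 * w 2 := by rw [x_conj (by norm_num)]; simp only [w]; group
  have hx₁ : x 1 * (w 2 * (w 1)⁻¹) * (x 1)⁻¹ = w 3 * (w 2)⁻¹ * (w 1)⁻¹ := by
    calc x 1 * (w 2 * (w 1)⁻¹) * (x 1)⁻¹ = (x 1 * w 2 * (x 1)⁻¹) * (x 1 * w 1 * (x 1)⁻¹)⁻¹ := by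
          group
      _ = _ := by rw [x_conj_w (by norm_num), hw₁]; group
  have hc : ⁅(PresentedGroup.of 0 : ThompsonF), PresentedGroup.of 1⁆ =
      (w 3 * (w 2)⁻¹)⁻¹ * (x 1 * (w 2 * (w 1)⁻¹) * (x 1)⁻¹) := by
    rw [hx₁, ← x_zero, ← x_one, commutatorElement_def, x_zero_conj le_rfl]
    simp only [w]
    group
  rw [hc]
  exact N.mul_mem (N.inv_mem (hstep 2 (by norm_num))) (‹N.Normal›.conj_mem _ (hstep 1 le_rfl) _)

theorem lift_injective {G : Type*} [Group G] {g₀ g₁ : G} (h₁ : ⁅g₁⁻¹ * g₀, g₀ * g₁ * g₀⁻¹⁆ = 1)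
    (h₂ : ⁅g₁⁻¹ * g₀, g₀ ^ 2 * g₁ * (g₀ ^ 2)⁻¹⁆ = 1) (hnc : g₀ * g₁ ≠ g₁ * g₀) :
    Function.Injective (lift g₀ g₁ h₁ h₂) := by
  rw [← MonoidHom.ker_eq_bot_iff]
  by_contra hker
  have h := commutatorElement_of_zero_of_one_mem hker
  rw [MonoidHom.mem_ker, map_commutatorElement, lift_of_zero, lift_of_one] at h
  exact hnc (commutatorElement_eq_one_iff_mul_comm.mp h)

end ThompsonF

theorem standard_copy_of_F_general (f₀ f₁ : Equiv.Perm ℝ)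
    (hnc : f₀ * f₁ ≠ f₁ * f₀)
    (hrel : ThompsonRel f₀ f₁) :
    ∃ φ : ThompsonF →* Equiv.Perm ℝ, Function.Injective φ ∧
      φ (PresentedGroup.of (0 : Fin 2)) = f₀ ∧
      φ (PresentedGroup.of (1 : Fin 2)) = f₁ ∧
      φ.range = Subgroup.closure {f₀, f₁} :=
  ⟨ThompsonF.lift f₀ f₁ hrel.1 hrel.2, ThompsonF.lift_injective hrel.1 hrel.2 hnc,
    ThompsonF.lift_of_zero, ThompsonF.lift_of_one, ThompsonF.range_lift⟩

/-- If `f₀, f₁ ∈ PL₀(I)` do not commute but satisfy the two standard relations of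
Thompson's group `F`, then they generate a standard isomorphic copy of `F`: there is
an injective homomorphism of `F` into `Perm ℝ` carrying the standard generators
`x₀, x₁` to `f₀, f₁`, whose image is the subgroup generated by `f₀` and `f₁`. -/
theorem standard_copy_of_F (f₀ f₁ : Equiv.Perm ℝ)
    (h₀ : IsPL0 f₀) (h₁ : IsPL0 f₁) (hnc : f₀ * f₁ ≠ f₁ * f₀)
    (hrel : ThompsonRel f₀ f₁) :
    ∃ φ : ThompsonF →* Equiv.Perm ℝ, Function.Injective φ ∧
      φ (PresentedGroup.of (0 : Fin 2)) = f₀ ∧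
      φ (PresentedGroup.of (1 : Fin 2)) = f₁ ∧
      φ.range = Subgroup.closure {f₀, f₁} :=
  standard_copy_of_F_general f₀ f₁ hnc hrel
end

section
/- Suppose a subgroup H of PL₀(I) is isomorphic to Thompson's group F. Then there exists an orbital W = (a,c) of H and an element h ∈ H such that h moves points arbitrarily close to one endpoint of W but fixes pointwise a neighborhood (within W) of the other endpoint. -/
open scoped commutatorElement
/-- The support of a subgroup `H` of `Perm ℝ`. -/
def SuppSubgroup (H : Subgroup (Equiv.Perm ℝ)) : Set ℝ :=
  {x : ℝ | ∃ h ∈ H, h x ≠ x}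

/-- `(a,c)` is an orbital of the subgroup `H`, i.e. a connected component of
`SuppSubgroup H`. -/
def IsSubgroupOrbital (H : Subgroup (Equiv.Perm ℝ)) (a c : ℝ) : Prop :=
  a < c ∧ Set.Ioo a c ⊆ SuppSubgroup H ∧ (∀ h ∈ H, h a = a) ∧ (∀ h ∈ H, h c = c)


/-!
Write `p₀, p₁ ∈ H` for the images of the generators of `F` and `x n = p₀ⁿ p₁ p₀⁻ⁿ`. The relators
give `x k * x n * (x k)⁻¹ = x (n + 1)` for `k < n`, so `w = (x 1)⁻¹ * x 2` commutes with `x n`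
for `n ≥ 3` and with the conjugates `p₀⁻ⁿ u p₀ⁿ` (`n ≥ 0`) of `u = p₁⁻¹ p₀`; and `w ≠ 1`, since the
standard action of `F` on `ℝ` shows that `F` is not abelian. Take an orbital `(a, c)` of `H` on
which `w` is nontrivial. Left slopes at `c` multiply, so the commutator `w` is the identity near
`c`, and `σ = sup {y ∈ (a, c) | w y ≠ y}` is a point of `(a, c)` fixed by everything in `H`
commuting with `w`. Hence `u` fixes the forward `p₀`-orbit of `σ` and `x 3` fixes its backward
orbit. Both orbits converge to fixed points of `p₀`; an interior limit would be fixed by `p₀` and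
`p₁`, hence by `H`, so they converge to endpoints, and a PL map whose fixed points accumulate at an
endpoint is the identity near it. If every element of `H` were trivial near `a` exactly when it is
trivial near `c`, then `u` and `x 3`, hence `p₁` and `p₀ = p₁ u`, would all be the identity near
`a`, giving a point of `(a, c)` fixed by all of `H`.
-/

open Set Filter Topology

def IsThompsonPair {G : Type*} [Group G] (g0 g1 : G) : Prop :=
  Commute (g1⁻¹ * g0) (g0 * g1 * g0⁻¹) ∧ Commute (g1⁻¹ * g0) (g0 ^ 2 * g1 * (g0 ^ 2)⁻¹)

/-- `thompsonGen g0 g1 n` plays the role of the generator `x_{n+1}` of the infinite presentation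
of `F`. -/
def thompsonGen {G : Type*} [Group G] (g0 g1 : G) (n : ℤ) : G := MulAut.conj (g0 ^ n) g1

def thompsonW {G : Type*} [Group G] (g0 g1 : G) : G := (thompsonGen g0 g1 1)⁻¹ * thompsonGen g0 g1 2

section ThompsonPair

variable {G : Type*} [Group G] {g0 g1 : G}

local notation "x" => thompsonGen g0 g1

theorem conj_thompsonGen (j n : ℤ) : MulAut.conj (g0 ^ j) (x n) = x (j + n) := by
  rw [thompsonGen, thompsonGen, zpow_add, map_mul, MulAut.mul_apply]

theorem thompsonGen_zero : x 0 = g1 := by simp [thompsonGen]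

theorem thompsonGen_one : x 1 = g0 * g1 * g0⁻¹ := by simp [thompsonGen]

theorem thompsonGen_two : x 2 = g0 ^ 2 * g1 * (g0 ^ 2)⁻¹ := by
  rw [thompsonGen, MulAut.conj_apply, zpow_ofNat]

theorem thompsonGen_mem {K : Subgroup G} (h0 : g0 ∈ K) (h1 : g1 ∈ K) (n : ℤ) : x n ∈ K :=
  K.mul_mem (K.mul_mem (K.zpow_mem h0 n) h1) (K.inv_mem (K.zpow_mem h0 n))

theorem inv_pow_mul_thompsonGen_mul_pow (n : ℕ) : (g0 ^ n)⁻¹ * x n * g0 ^ n = g1 := by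
  simp only [thompsonGen, MulAut.conj_apply, zpow_natCast]
  group

theorem thompsonW_eq_commutatorElement : thompsonW g0 g1 = ⁅(x 1)⁻¹, g0⁆ := by
  rw [thompsonW, commutatorElement_def, inv_inv, thompsonGen_one, thompsonGen_two]
  group

theorem thompsonW_ne_one (h : ¬Commute g0 g1) : thompsonW g0 g1 ≠ 1 := by
  intro h12
  have h01 := congrArg (MulAut.conj (g0 ^ (-1 : ℤ))) (inv_mul_eq_one.1 h12)
  rw [conj_thompsonGen, conj_thompsonGen, neg_add_cancel, thompsonGen_zero,
    show (-1 : ℤ) + 2 = 1 by norm_num, thompsonGen_one] at h01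
  exact h (mul_inv_eq_iff_eq_mul.1 h01.symm)

theorem commute_inv_mul_iff_semiconjBy (y : G) :
    Commute (g1⁻¹ * g0) y ↔ SemiconjBy g1 y (g0 * y * g0⁻¹) := by
  simp only [Commute, SemiconjBy]
  constructor <;> intro h
  · calc g1 * y = g1 * (y * (g1⁻¹ * g0)) * (g0⁻¹ * g1) := by group
      _ = g0 * y * g0⁻¹ * g1 := by rw [← h]; group
  · calc g1⁻¹ * g0 * y = g1⁻¹ * (g0 * y * g0⁻¹ * g1) * (g1⁻¹ * g0) := by group
      _ = y * (g1⁻¹ * g0) := by rw [← h]; group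

theorem commute_inv_mul_thompsonGen_iff (n : ℤ) :
    Commute (g1⁻¹ * g0) (x n) ↔ SemiconjBy g1 (x n) (x (n + 1)) := by
  have : g0 * x n * g0⁻¹ = x (n + 1) := by
    simpa [add_comm] using conj_thompsonGen (g0 := g0) (g1 := g1) 1 n
  rw [commute_inv_mul_iff_semiconjBy, this]

theorem SemiconjBy.thompsonGen_shift {m : ℤ} (h : SemiconjBy g1 (x m) (x (m + 1))) (k : ℤ) :
    SemiconjBy (x k) (x (k + m)) (x (k + m + 1)) := by
  have := h.map (MulAut.conj (g0 ^ k))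
  rwa [conj_thompsonGen, conj_thompsonGen, ← add_assoc] at this

theorem SemiconjBy.thompsonGen_add_two {m : ℤ} (h1 : SemiconjBy g1 (x 1) (x 2))
    (hm : SemiconjBy g1 (x m) (x (m + 1))) (hm1 : SemiconjBy g1 (x (m + 1)) (x (m + 2))) :
    SemiconjBy g1 (x (m + 2)) (x (m + 3)) := by
  have hA : x (m + 2) = x 1 * x (m + 1) * (x 1)⁻¹ := eq_mul_inv_of_mul_eq <| by
    simpa [add_comm, add_left_comm] using (hm.thompsonGen_shift 1).eq.symm
  have hB : x (m + 3) = x 2 * x (m + 2) * (x 2)⁻¹ := eq_mul_inv_of_mul_eq <| by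
    simpa [add_comm, add_left_comm] using (hm.thompsonGen_shift 2).eq.symm
  rw [hB]
  nth_rw 1 [hA]
  exact (h1.mul_right hm1).mul_right h1.inv_right

namespace IsThompsonPair

variable (h : IsThompsonPair g0 g1)
include h

theorem semiconjBy_thompsonGen_one : SemiconjBy g1 (x 1) (x 2) := by
  have h1 := h.1
  rw [← thompsonGen_one] at h1
  exact (commute_inv_mul_thompsonGen_iff 1).1 h1

theorem semiconjBy_thompsonGen_two : SemiconjBy g1 (x 2) (x 3) := by
  have h2 := h.2
  rw [← thompsonGen_two] at h2
  exact (commute_inv_mul_thompsonGen_iff 2).1 h2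

theorem semiconjBy_thompsonGen {n : ℤ} (hn : 1 ≤ n) : SemiconjBy g1 (x n) (x (n + 1)) := by
  have h1 := h.semiconjBy_thompsonGen_one
  have : ∀ k : ℕ, SemiconjBy g1 (x (k + 1)) (x (k + 2)) ∧
      SemiconjBy g1 (x (k + 2)) (x (k + 3)) := by
    intro k
    induction k with
    | zero => exact ⟨h1, h.semiconjBy_thompsonGen_two⟩
    | succ k ih =>
      push_cast
      exact ⟨by simpa [add_assoc] using ih.2,
        by simpa [add_assoc] using h1.thompsonGen_add_two ih.1 ih.2⟩
  obtain ⟨k, rfl⟩ := Int.le.dest hn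
  convert (this k).1 using 2 <;> ring

theorem semiconjBy_thompsonGen_thompsonGen {k n : ℤ} (hkn : k < n) :
    SemiconjBy (x k) (x n) (x (n + 1)) := by
  convert (h.semiconjBy_thompsonGen (n := n - k) (by omega)).thompsonGen_shift k using 2 <;> ring

theorem commute_inv_mul_thompsonGen {n : ℤ} (hn : 1 ≤ n) : Commute (g1⁻¹ * g0) (x n) :=
  (commute_inv_mul_thompsonGen_iff n).2 (h.semiconjBy_thompsonGen hn)

theorem commute_thompsonW_thompsonGen {n : ℤ} (hn : 3 ≤ n) : Commute (thompsonW g0 g1) (x n) :=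
  (h.semiconjBy_thompsonGen_thompsonGen (by omega : (1 : ℤ) < n)).inv_symm_left.mul_left
    (h.semiconjBy_thompsonGen_thompsonGen (by omega : (2 : ℤ) < n))

theorem commute_thompsonW_conj (n : ℕ) :
    Commute (thompsonW g0 g1) (MulAut.conj (g0 ^ n)⁻¹ (g1⁻¹ * g0)) := by
  have key (j : ℤ) (hj : 1 ≤ j) : Commute (MulAut.conj (g0 ^ n)⁻¹ (g1⁻¹ * g0)) (x j) := by
    have := (h.commute_inv_mul_thompsonGen (n := n + j) (by omega)).map
      (MulAut.conj (g0 ^ (-(n : ℤ))))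
    rwa [conj_thompsonGen, neg_add_cancel_left, zpow_neg, zpow_natCast] at this
  exact ((key 1 le_rfl).inv_right.mul_right (key 2 one_le_two)).symm

theorem map {G' : Type*} [Group G'] (φ : G →* G') : IsThompsonPair (φ g0) (φ g1) := by
  simpa only [IsThompsonPair, map_mul, map_inv, map_pow] using And.intro (h.1.map φ) (h.2.map φ)

theorem lift_eq_one : ∀ r ∈ thompsonRels, FreeGroup.lift ![g0, g1] r = 1 := by
  rintro r (rfl | rfl) <;>
    simp only [map_commutatorElement, map_mul, map_inv, map_pow, FreeGroup.lift_apply_of,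
      Matrix.cons_val_zero, Matrix.cons_val_one, commutatorElement_eq_one_iff_commute]
  exacts [h.1, h.2]

end IsThompsonPair

end ThompsonPair

theorem isThompsonPair_of :
    IsThompsonPair (PresentedGroup.of 0 : ThompsonF) (PresentedGroup.of 1) := by
  have h1 := PresentedGroup.one_of_mem (show _ ∈ thompsonRels from Or.inl rfl)
  have h2 := PresentedGroup.one_of_mem (show _ ∈ thompsonRels from Or.inr rfl)
  simp only [map_commutatorElement, map_mul, map_inv, map_pow,
    commutatorElement_eq_one_iff_commute] at h1 h2
  exact ⟨h1, h2⟩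

namespace ThompsonModel

def x0 : Equiv.Perm ℝ := Equiv.addRight 1

noncomputable def x1 : Equiv.Perm ℝ where
  toFun t := if t ≤ 0 then t else if t ≤ 1 then 2 * t else t + 1
  invFun t := if t ≤ 0 then t else if t ≤ 2 then t / 2 else t - 1
  left_inv t := by dsimp only; split_ifs <;> linarith
  right_inv t := by dsimp only; split_ifs <;> linarith

theorem x1_of_nonpos {t : ℝ} (ht : t ≤ 0) : x1 t = t := if_pos ht

theorem x1_inv_of_two_le {t : ℝ} (ht : 2 ≤ t) : x1⁻¹ t = t - 1 := by
  change (if t ≤ 0 then t else if t ≤ 2 then t / 2 else t - 1) = t - 1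
  split_ifs <;> linarith

theorem disjoint_inv_mul_conj {k : ℝ} (hk : 1 ≤ k) :
    (x1⁻¹ * x0).Disjoint (Equiv.addRight k * x1 * (Equiv.addRight k)⁻¹) := by
  intro t
  rcases le_total 1 t with ht | ht
  · left
    simp only [Equiv.Perm.mul_apply, x0, Equiv.coe_addRight,
      x1_inv_of_two_le (by linarith : 2 ≤ t + 1)]
    ring
  · right
    simp [Equiv.Perm.mul_apply, x1_of_nonpos (by linarith : t + -k ≤ 0)]

theorem isThompsonPair : IsThompsonPair x0 x1 := by
  have hsq : x0 ^ 2 = Equiv.addRight 2 := by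
    ext t; simp [x0, pow_two]; ring
  exact ⟨(disjoint_inv_mul_conj le_rfl).commute, hsq ▸ (disjoint_inv_mul_conj one_le_two).commute⟩

theorem not_commute : ¬Commute x0 x1 := by
  intro h
  have := congrArg (· 0) h.eq
  norm_num [x0, x1] at this

end ThompsonModel

theorem ThompsonF.not_commute_of :
    ¬Commute (PresentedGroup.of 0 : ThompsonF) (PresentedGroup.of 1) := fun h ↦
  ThompsonModel.not_commute (by
    simpa using h.map (PresentedGroup.toGroup ThompsonModel.isThompsonPair.lift_eq_one))

theorem closure_pair_eq_of_thompsonF_mulEquiv {G : Type*} [Group G] {K : Subgroup G}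
    (θ : ThompsonF ≃* K) :
    Subgroup.closure {(θ (PresentedGroup.of 0) : G), (θ (PresentedGroup.of 1) : G)} = K := by
  set φ := K.subtype.comp θ.toMonoidHom
  have himage : φ '' range PresentedGroup.of =
      {(θ (PresentedGroup.of 0) : G), (θ (PresentedGroup.of 1) : G)} := by
    ext; simp [φ, Fin.exists_fin_two, eq_comm]
  rw [← himage, ← MonoidHom.map_closure, PresentedGroup.closure_range_of,
    ← MonoidHom.range_eq_map]
  ext y
  exact ⟨fun ⟨z, hz⟩ ↦ hz ▸ (θ z).2, fun hy ↦ ⟨θ.symm ⟨y, hy⟩, by simp [φ]⟩⟩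

theorem affine_eq_of_frequently_cofinite {s t s' t' : ℝ}
    (h : ∃ᶠ x in cofinite, s * x + t = s' * x + t') : s = s' ∧ t = t' := by
  obtain ⟨x, hx, y, hy, hxy⟩ := (frequently_cofinite_iff_infinite.1 h).nontrivial
  replace hx : s * x + t = s' * x + t' := hx
  replace hy : s * y + t = s' * y + t' := hy
  have hs : (s - s') * (x - y) = 0 := by linear_combination hx - hy
  obtain rfl := sub_eq_zero.1 ((mul_eq_zero.1 hs).resolve_right (sub_ne_zero.2 hxy))
  exact ⟨rfl, by linarith⟩

theorem affine_eq_of_eventually_nhds {s t s' t' x : ℝ}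
    (h : ∀ᶠ y in 𝓝 x, s * y + t = s' * y + t') : s = s' ∧ t = t' :=
  affine_eq_of_frequently_cofinite
    ((h.filter_mono nhdsWithin_le_nhds).frequently.filter_mono (nhdsNE_le_cofinite x))

theorem IsPreconnected.exists_affine_of_locally_affine {U : Set ℝ} (hU : IsPreconnected U)
    {f : ℝ → ℝ} (hf : ∀ x ∈ U, ∃ s t : ℝ, ∀ᶠ y in 𝓝 x, f y = s * y + t) :
    ∃ s t : ℝ, ∀ x ∈ U, f x = s * x + t := by
  rcases U.eq_empty_or_nonempty with rfl | ⟨x₀, hx₀⟩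
  · exact ⟨0, 0, by simp⟩
  obtain ⟨s, t, hst⟩ := hf x₀ hx₀
  let SameGerm (x y : ℝ) : Prop :=
    ∀ s t : ℝ, (∀ᶠ z in 𝓝 x, f z = s * z + t) → ∀ᶠ z in 𝓝 y, f z = s * z + t
  have hopen : ∀ x ∈ U, ∀ᶠ y in 𝓝[U] x, SameGerm x y ∧ SameGerm y x := by
    intro x hx
    obtain ⟨s₀, t₀, h₀⟩ := hf x hx
    filter_upwards [nhdsWithin_le_nhds h₀.eventually_nhds] with y hy
    constructor
    · intro s t h
      obtain ⟨rfl, rfl⟩ :=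
        affine_eq_of_eventually_nhds ((h₀.and h).mono fun z hz ↦ hz.1.symm.trans hz.2)
      exact hy
    · intro s t h
      obtain ⟨rfl, rfl⟩ :=
        affine_eq_of_eventually_nhds ((hy.and h).mono fun z hz ↦ hz.1.symm.trans hz.2)
      exact h₀
  exact ⟨s, t, fun x hx ↦ (hU.induction₂' SameGerm hopen
    (fun _ _ _ _ _ _ hxy hyz s t h ↦ hyz s t (hxy s t h)) hx₀ hx s t hst).self_of_nhds⟩

theorem eventually_eq_self_of_frequently {f : ℝ → ℝ} {l : Filter ℝ} (hl : l ≤ cofinite)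
    (haff : ∃ s t : ℝ, ∀ᶠ x in l, f x = s * x + t) (h : ∃ᶠ x in l, f x = x) :
    ∀ᶠ x in l, f x = x := by
  obtain ⟨s, t, hst⟩ := haff
  obtain ⟨rfl, rfl⟩ := affine_eq_of_frequently_cofinite (s' := 1) (t' := 0)
    (((h.and_eventually hst).mono fun x hx ↦ by rw [← hx.2, hx.1]; ring).filter_mono hl)
  exact hst.mono fun x hx ↦ by rw [hx]; ring

namespace IsPL0

variable {f : Equiv.Perm ℝ} (hf : IsPL0 f)
include hf

theorem continuous : Continuous f := hf.1.monotone.continuous_of_surjective f.surjective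

theorem eventually_affine {l : Filter ℝ} {ι : Sort*} {p : ι → Prop} {U : ι → Set ℝ}
    (hl : l.HasBasis p U) (hU : ∀ i, p i → IsPreconnected (U i)) (hcof : l ≤ cofinite) :
    ∃ s t : ℝ, ∀ᶠ x in l, f x = s * x + t := by
  obtain ⟨B, hB⟩ := hf.2.2.2
  obtain ⟨i, hi, hiB⟩ := hl.mem_iff.1 (hcof B.eventually_cofinite_notMem)
  obtain ⟨s, t, hst⟩ := (hU i hi).exists_affine_of_locally_affine fun x hx ↦ hB x (hiB hx)
  exact ⟨s, t, hl.eventually_iff.2 ⟨i, hi, hst⟩⟩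

theorem eventually_eq_self_nhdsGT_of_frequently {e : ℝ} (h : ∃ᶠ x in 𝓝[>] e, f x = x) :
    ∀ᶠ x in 𝓝[>] e, f x = x :=
  have hcof := (nhdsGT_le_nhdsNE e).trans (nhdsNE_le_cofinite e)
  eventually_eq_self_of_frequently hcof
    (hf.eventually_affine (nhdsGT_basis e) (fun _ _ ↦ isPreconnected_Ioo) hcof) h

theorem eventually_eq_self_nhdsLT_of_frequently {e : ℝ} (h : ∃ᶠ x in 𝓝[<] e, f x = x) :
    ∀ᶠ x in 𝓝[<] e, f x = x :=
  have hcof := (nhdsLT_le_nhdsNE e).trans (nhdsNE_le_cofinite e)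
  eventually_eq_self_of_frequently hcof
    (hf.eventually_affine (nhdsLT_basis e) (fun _ _ ↦ isPreconnected_Ioo) hcof) h

theorem tendsto_nhdsGT {e : ℝ} (he : f e = e) : Tendsto f (𝓝[>] e) (𝓝[>] e) := by
  have := hf.continuous.continuousWithinAt.tendsto_nhdsWithin (s := Ioi e) (x := e)
    (t := Ioi (f e)) fun x hx ↦ hf.1 hx
  rwa [he] at this

theorem tendsto_nhdsLT {e : ℝ} (he : f e = e) : Tendsto f (𝓝[<] e) (𝓝[<] e) := by
  have := hf.continuous.continuousWithinAt.tendsto_nhdsWithin (s := Iio e) (x := e)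
    (t := Iio (f e)) fun x hx ↦ hf.1 hx
  rwa [he] at this

theorem exists_slope_nhdsLT {c : ℝ} (hc : f c = c) :
    ∃ s : ℝ, ∀ᶠ x in 𝓝[<] c, f x = c + s * (x - c) := by
  obtain ⟨s, t, hst⟩ := hf.eventually_affine (nhdsLT_basis c) (fun _ _ ↦ isPreconnected_Ioo)
    ((nhdsLT_le_nhdsNE c).trans (nhdsNE_le_cofinite c))
  have hlim : s * c + t = c := by
    have h1 : Tendsto (fun x ↦ s * x + t) (𝓝[<] c) (𝓝 (s * c + t)) :=
      ((by fun_prop : Continuous fun x : ℝ ↦ s * x + t).tendsto c).mono_left nhdsWithin_le_nhds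
    have h2 := (hf.continuous.tendsto c).mono_left (nhdsWithin_le_nhds (s := Iio c))
    rw [hc] at h2
    exact tendsto_nhds_unique h1 (h2.congr' hst)
  exact ⟨s, hst.mono fun x hx ↦ by linear_combination hx + hlim⟩

theorem image_Ioo (a b : ℝ) : f '' Ioo a b = Ioo (f a) (f b) :=
  (hf.1.orderIsoOfSurjective f f.surjective).image_Ioo a b

theorem exists_tendsto_pow_apply {a c : ℝ} (ha : f a = a) (hc : f c = c) {x : ℝ}
    (hx : x ∈ Ioo a c) :
    ∃ L ∈ Icc a c, f L = L ∧ Tendsto (fun n : ℕ ↦ (f ^ n) x) atTop (𝓝[Ioo a c] L) := by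
  have hmaps : MapsTo f (Ioo a c) (Ioo a c) := by
    rw [mapsTo_iff_image_subset, hf.image_Ioo, ha, hc]
  have horbit (n : ℕ) : (f ^ n) x ∈ Ioo a c := hmaps.iterate n hx
  obtain ⟨L, hL⟩ : ∃ L, Tendsto (fun n : ℕ ↦ (f ^ n) x) atTop (𝓝 L) := by
    rcases le_total x (f x) with h | h
    · exact ⟨_, tendsto_atTop_ciSup (hf.1.monotone.monotone_iterate_of_le_map h)
        ⟨c, by rintro _ ⟨n, rfl⟩; exact (horbit n).2.le⟩⟩
    · exact ⟨_, tendsto_atTop_ciInf (hf.1.monotone.antitone_iterate_of_map_le h)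
        ⟨a, by rintro _ ⟨n, rfl⟩; exact (horbit n).1.le⟩⟩
  refine ⟨L, isClosed_Icc.mem_of_tendsto hL (.of_forall fun n ↦ Ioo_subset_Icc_self (horbit n)),
    tendsto_nhds_unique ((hf.continuous.tendsto L).comp hL) ?_,
    tendsto_nhdsWithin_iff.2 ⟨hL, .of_forall horbit⟩⟩
  simpa only [Function.comp_def, ← Equiv.Perm.mul_apply, ← pow_succ'] using
    hL.comp (tendsto_add_atTop_nat 1)

end IsPL0

theorem eventually_commutatorElement_apply_nhdsLT {H : Subgroup (Equiv.Perm ℝ)}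
    (hH : ∀ f ∈ H, IsPL0 f) {c : ℝ} (hc : ∀ f ∈ H, f c = c) {f g : Equiv.Perm ℝ}
    (hf : f ∈ H) (hg : g ∈ H) : ∀ᶠ x in 𝓝[<] c, ⁅f, g⁆ x = x := by
  obtain ⟨s, hs⟩ := (hH f hf).exists_slope_nhdsLT (hc f hf)
  obtain ⟨t, ht⟩ := (hH g hg).exists_slope_nhdsLT (hc g hg)
  have hcomm : ∀ᶠ x in 𝓝[<] c, (f * g) x = (g * f) x := by
    filter_upwards [hs, ht, ((hH g hg).tendsto_nhdsLT (hc g hg)).eventually hs,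
      ((hH f hf).tendsto_nhdsLT (hc f hf)).eventually ht] with x hfx hgx hfgx hgfx
    rw [Equiv.Perm.mul_apply, Equiv.Perm.mul_apply, hfgx, hgfx, hfx, hgx]
    ring
  have hgf : (g * f)⁻¹ ∈ H := H.inv_mem (H.mul_mem hg hf)
  filter_upwards [((hH _ hgf).tendsto_nhdsLT (hc _ hgf)).eventually hcomm] with x hx
  rw [show ⁅f, g⁆ = f * g * (g * f)⁻¹ by group, Equiv.Perm.mul_apply, hx]
  exact (g * f).apply_symm_apply x

theorem image_supp (f g : Equiv.Perm ℝ) : f '' Supp g = Supp (f * g * f⁻¹) := by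
  ext y
  simp [Supp, Equiv.Perm.mul_apply, Equiv.image_eq_preimage_symm, ← Equiv.eq_symm_apply]

theorem IsClosed.exists_Ioo_subset_compl {α : Type*} [ConditionallyCompleteLinearOrder α]
    [TopologicalSpace α] [OrderTopology α] {P : Set α} (hP : IsClosed P) {x : α} (hx : x ∉ P)
    (hlo : ∃ p ∈ P, p ≤ x) (hhi : ∃ p ∈ P, x ≤ p) :
    ∃ a ∈ P, ∃ c ∈ P, x ∈ Ioo a c ∧ Ioo a c ⊆ Pᶜ := by
  have hbdd : BddAbove (P ∩ Iic x) := ⟨x, fun _ hy ↦ hy.2⟩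
  have hbdd' : BddBelow (P ∩ Ici x) := ⟨x, fun _ hy ↦ hy.2⟩
  obtain ⟨p, hp, hpx⟩ := hlo
  obtain ⟨q, hq, hxq⟩ := hhi
  have ha := (hP.inter isClosed_Iic).csSup_mem ⟨p, hp, hpx⟩ hbdd
  have hc := (hP.inter isClosed_Ici).csInf_mem ⟨q, hq, hxq⟩ hbdd'
  refine ⟨_, ha.1, _, hc.1, ⟨ha.2.lt_of_ne fun h ↦ hx (h ▸ ha.1),
    hc.2.lt_of_ne' fun h ↦ hx (h ▸ hc.1)⟩, fun y hy hyP ↦ ?_⟩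
  rcases le_total y x with hyx | hxy
  · exact (le_csSup hbdd ⟨hyP, hyx⟩).not_gt hy.1
  · exact (csInf_le hbdd' ⟨hyP, hxy⟩).not_gt hy.2

theorem mem_compl_suppSubgroup {H : Subgroup (Equiv.Perm ℝ)} {y : ℝ} :
    y ∈ (SuppSubgroup H)ᶜ ↔ ∀ f ∈ H, f y = y := by
  simp [SuppSubgroup]

theorem exists_isSubgroupOrbital_mem {H : Subgroup (Equiv.Perm ℝ)} (hH : ∀ f ∈ H, IsPL0 f)
    {x : ℝ} (hx : x ∈ SuppSubgroup H) : ∃ a c : ℝ, IsSubgroupOrbital H a c ∧ x ∈ Ioo a c := by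
  have hclosed : IsClosed (SuppSubgroup H)ᶜ := by
    have : (SuppSubgroup H)ᶜ = ⋂ f ∈ H, {y | f y = y} := by
      ext y; simpa using mem_compl_suppSubgroup (H := H) (y := y)
    rw [this]
    exact isClosed_biInter fun f hf ↦ isClosed_eq (hH f hf).continuous continuous_id
  obtain ⟨f, hf, hfx⟩ := hx
  have h0 : (0 : ℝ) ∈ (SuppSubgroup H)ᶜ :=
    mem_compl_suppSubgroup.2 fun g hg ↦ (hH g hg).2.1 0 le_rfl
  have h1 : (1 : ℝ) ∈ (SuppSubgroup H)ᶜ :=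
    mem_compl_suppSubgroup.2 fun g hg ↦ (hH g hg).2.2.1 1 le_rfl
  obtain ⟨a, ha, c, hc, hxac, hsub⟩ := hclosed.exists_Ioo_subset_compl (not_not.2 ⟨f, hf, hfx⟩)
    ⟨0, h0, le_of_not_ge fun h ↦ hfx ((hH f hf).2.1 x h)⟩
    ⟨1, h1, le_of_not_ge fun h ↦ hfx ((hH f hf).2.2.1 x h)⟩
  exact ⟨a, c, ⟨hxac.1.trans hxac.2, fun y hy ↦ not_not.1 (hsub hy),
    mem_compl_suppSubgroup.1 ha, mem_compl_suppSubgroup.1 hc⟩, hxac⟩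

theorem IsSubgroupOrbital.notMem_stabilizer {H : Subgroup (Equiv.Perm ℝ)} {a c : ℝ}
    (horb : IsSubgroupOrbital H a c) {p0 p1 : Equiv.Perm ℝ}
    (hgen : Subgroup.closure {p0, p1} = H) {y : ℝ} (hy : y ∈ Ioo a c)
    (h0 : p0 ∈ MulAction.stabilizer (Equiv.Perm ℝ) y) :
    p1 ∉ MulAction.stabilizer (Equiv.Perm ℝ) y := fun h1 ↦ by
  obtain ⟨h, hh, hhy⟩ := horb.2.1 hy
  rw [← hgen] at hh
  exact hhy ((Subgroup.closure_le _).2 (pair_subset h0 h1) hh)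

namespace IsSubgroupOrbital

variable {H : Subgroup (Equiv.Perm ℝ)} (hH : ∀ f ∈ H, IsPL0 f) {a c : ℝ}
  (horb : IsSubgroupOrbital H a c)
include hH horb

theorem exists_fixed_of_commute {w : Equiv.Perm ℝ} (hw : ∀ᶠ y in 𝓝[<] c, w y = y) {x : ℝ}
    (hx : x ∈ Ioo a c) (hwx : w x ≠ x) : ∃ σ ∈ Ioo a c, ∀ z ∈ H, Commute z w → z σ = σ := by
  set S := Ioo a c ∩ Supp w
  have hS : S.Nonempty := ⟨x, hx, hwx⟩
  have hbdd : BddAbove S := ⟨c, fun y hy ↦ hy.1.2.le⟩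
  obtain ⟨l, hlc, hl⟩ := mem_nhdsLT_iff_exists_Ioo_subset.1 hw
  have hσl : sSup S ≤ l := csSup_le hS fun y hy ↦ le_of_not_gt fun hly ↦ hy.2 (hl ⟨hly, hy.1.2⟩)
  refine ⟨sSup S, ⟨hx.1.trans_le (le_csSup hbdd ⟨hx, hwx⟩), hσl.trans_lt hlc⟩,
    fun z hz hzw ↦ ?_⟩
  have himage : z '' S = S := by
    rw [image_inter z.injective, (hH z hz).image_Ioo, horb.2.2.1 z hz, horb.2.2.2 z hz,
      image_supp, hzw.mul_inv_cancel]
  rw [(hH z hz).1.monotone.map_csSup_of_continuousAt (hH z hz).continuous.continuousAt hS hbdd,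
    himage]

theorem fixed_or_eventually_fixed_of_orbit {f z : Equiv.Perm ℝ} (hf : f ∈ H) (hz : z ∈ H)
    {x : ℝ} (hx : x ∈ Ioo a c) (hfix : ∀ n : ℕ, z ((f ^ n) x) = (f ^ n) x) :
    (∃ L ∈ Ioo a c, f L = L ∧ z L = L) ∨ (∀ᶠ y in 𝓝[>] a, z y = y) ∨
      ∀ᶠ y in 𝓝[<] c, z y = y := by
  obtain ⟨L, hL, hfL, hlim⟩ := (hH f hf).exists_tendsto_pow_apply (horb.2.2.1 f hf)
    (horb.2.2.2 f hf) hx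
  have hfreq {l : Filter ℝ} (hl : 𝓝[Ioo a c] L ≤ l) : ∃ᶠ y in l, z y = y :=
    (hlim.mono_right hl).frequently (.of_forall hfix)
  rcases hL.1.eq_or_lt with rfl | haL
  · exact .inr <| .inl <| (hH z hz).eventually_eq_self_nhdsGT_of_frequently <|
      hfreq (nhdsWithin_mono _ Ioo_subset_Ioi_self)
  rcases hL.2.eq_or_lt with rfl | hLc
  · exact .inr <| .inr <| (hH z hz).eventually_eq_self_nhdsLT_of_frequently <|
      hfreq (nhdsWithin_mono _ Ioo_subset_Iio_self)
  refine .inl ⟨L, ⟨haL, hLc⟩, hfL, ?_⟩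
  have hlim' := hlim.mono_right nhdsWithin_le_nhds
  exact tendsto_nhds_unique (((hH z hz).continuous.tendsto L).comp hlim')
    (hlim'.congr fun n ↦ (hfix n).symm)

section ThompsonPair

variable {p0 p1 : Equiv.Perm ℝ} (hp0 : p0 ∈ H) (hp1 : p1 ∈ H) (hpair : IsThompsonPair p0 p1)
include hp0 hp1 hpair

theorem exists_orbits_fixed {x : ℝ} (hx : x ∈ Ioo a c) (hwx : thompsonW p0 p1 x ≠ x) :
    ∃ σ ∈ Ioo a c, (∀ n : ℕ, (p1⁻¹ * p0) ((p0 ^ n) σ) = (p0 ^ n) σ) ∧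
      ∀ n : ℕ, thompsonGen p0 p1 3 ((p0⁻¹ ^ n) σ) = (p0⁻¹ ^ n) σ := by
  have hgenH := thompsonGen_mem hp0 hp1
  have hwc : ∀ᶠ y in 𝓝[<] c, thompsonW p0 p1 y = y := by
    rw [thompsonW_eq_commutatorElement]
    exact eventually_commutatorElement_apply_nhdsLT hH horb.2.2.2 (H.inv_mem (hgenH 1)) hp0
  obtain ⟨σ, hσ, hσfix⟩ := horb.exists_fixed_of_commute hH hwc hx hwx
  refine ⟨σ, hσ, fun n ↦ ?_, fun n ↦ ?_⟩
  · have hk := H.inv_mem (H.pow_mem hp0 n)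
    have := hσfix _ (H.mul_mem (H.mul_mem hk (H.mul_mem (H.inv_mem hp1) hp0)) (H.inv_mem hk))
      (hpair.commute_thompsonW_conj n).symm
    rwa [inv_inv, Equiv.Perm.mul_apply, Equiv.Perm.mul_apply, Equiv.Perm.inv_eq_iff_eq] at this
  · have := hσfix _ (hgenH (n + 3)) (hpair.commute_thompsonW_thompsonGen (by omega)).symm
    rw [← conj_thompsonGen, MulAut.conj_apply, zpow_natCast, Equiv.Perm.mul_apply,
      Equiv.Perm.mul_apply] at this
    rw [inv_pow, Equiv.Perm.eq_inv_iff_eq, this]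

theorem exists_not_eventually_fixed_nhdsGT_iff_nhdsLT (hgen : Subgroup.closure {p0, p1} = H)
    {x : ℝ} (hx : x ∈ Ioo a c) (hwx : thompsonW p0 p1 x ≠ x) :
    ∃ h ∈ H, ¬((∀ᶠ y in 𝓝[>] a, h y = y) ↔ ∀ᶠ y in 𝓝[<] c, h y = y) := by
  by_contra! hsym
  have hu : p1⁻¹ * p0 ∈ H := H.mul_mem (H.inv_mem hp1) hp0
  have hv : thompsonGen p0 p1 3 ∈ H := thompsonGen_mem hp0 hp1 3
  have hp1_eq : (p0 ^ 3)⁻¹ * thompsonGen p0 p1 3 * p0 ^ 3 = p1 := by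
    exact_mod_cast inv_pow_mul_thompsonGen_mul_pow (g0 := p0) (g1 := p1) 3
  obtain ⟨σ, hσ, hufix, hvfix⟩ := horb.exists_orbits_fixed hH hp0 hp1 hpair hx hwx
  have hu_a : ∀ᶠ y in 𝓝[>] a, (p1⁻¹ * p0) y = y := by
    rcases horb.fixed_or_eventually_fixed_of_orbit hH hp0 hu hσ hufix
      with ⟨L, hL, hL0, hLu⟩ | h | h
    · refine (horb.notMem_stabilizer hgen hL hL0 ?_).elim
      rw [show p1 = p0 * (p1⁻¹ * p0)⁻¹ by group]
      exact Subgroup.mul_mem _ hL0 (Subgroup.inv_mem _ hLu)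
    · exact h
    · exact (hsym _ hu).2 h
  have hv_a : ∀ᶠ y in 𝓝[>] a, thompsonGen p0 p1 3 y = y := by
    rcases horb.fixed_or_eventually_fixed_of_orbit hH (H.inv_mem hp0) hv hσ hvfix
      with ⟨L, hL, hL0, hLv⟩ | h | h
    · have hL0' : p0 ∈ MulAction.stabilizer (Equiv.Perm ℝ) L := inv_mem_iff.1 hL0
      refine (horb.notMem_stabilizer hgen hL hL0' ?_).elim
      rw [← hp1_eq]
      have h3 := Subgroup.pow_mem _ hL0' 3
      exact Subgroup.mul_mem _ (Subgroup.mul_mem _ (Subgroup.inv_mem _ h3) hLv) h3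
    · exact h
    · exact (hsym _ hv).2 h
  have hp1_a : ∀ᶠ y in 𝓝[>] a, p1 y = y := by
    have h3 : p0 ^ 3 ∈ H := H.pow_mem hp0 3
    filter_upwards [((hH _ h3).tendsto_nhdsGT (horb.2.2.1 _ h3)).eventually hv_a] with y hy
    rw [← hp1_eq, Equiv.Perm.mul_apply, Equiv.Perm.mul_apply, hy]
    exact (p0 ^ 3).symm_apply_apply y
  have hp0_a : ∀ᶠ y in 𝓝[>] a, p0 y = y := by
    filter_upwards [hp1_a, hu_a] with y h1 hu
    rwa [← mul_inv_cancel_left p1 p0, Equiv.Perm.mul_apply, hu]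
  obtain ⟨y, ⟨h0, h1⟩, hy⟩ := ((hp0_a.and hp1_a).and (Ioo_mem_nhdsGT horb.1)).exists
  exact horb.notMem_stabilizer hgen hy h0 h1

end ThompsonPair

end IsSubgroupOrbital

section OneSided

variable {p : ℝ → Prop} {a c : ℝ}

theorem Filter.Frequently.exists_mem_Ioo_lt_add (h : ∃ᶠ x in 𝓝[>] a, p x) (hac : a < c)
    {ε : ℝ} (hε : 0 < ε) : ∃ x ∈ Ioo a c, x < a + ε ∧ p x := by
  obtain ⟨x, hpx, hx⟩ :=
    (h.and_eventually (Ioo_mem_nhdsGT (lt_min hac (lt_add_of_pos_right a hε)))).exists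
  exact ⟨x, ⟨hx.1, hx.2.trans_le (min_le_left _ _)⟩, hx.2.trans_le (min_le_right _ _), hpx⟩

theorem Filter.Frequently.exists_mem_Ioo_sub_lt (h : ∃ᶠ x in 𝓝[<] c, p x) (hac : a < c)
    {ε : ℝ} (hε : 0 < ε) : ∃ x ∈ Ioo a c, c - ε < x ∧ p x := by
  obtain ⟨x, hpx, hx⟩ :=
    (h.and_eventually (Ioo_mem_nhdsLT (max_lt hac (sub_lt_self c hε)))).exists
  exact ⟨x, ⟨(le_max_left _ _).trans_lt hx.1, hx.2⟩, (le_max_right _ _).trans_lt hx.1, hpx⟩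

theorem Filter.Eventually.exists_mem_Ioo_forall_Ioo_nhdsGT (h : ∀ᶠ x in 𝓝[>] a, p x)
    (hac : a < c) : ∃ q ∈ Ioo a c, ∀ x ∈ Ioo a q, p x := by
  obtain ⟨q, hq, hsub⟩ :=
    (mem_nhdsGT_iff_exists_mem_Ioc_Ioo_subset (left_lt_add_div_two.2 hac)).1 h
  exact ⟨q, ⟨hq.1, hq.2.trans_lt (add_div_two_lt_right.2 hac)⟩, hsub⟩

theorem Filter.Eventually.exists_mem_Ioo_forall_Ioo_nhdsLT (h : ∀ᶠ x in 𝓝[<] c, p x)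
    (hac : a < c) : ∃ q ∈ Ioo a c, ∀ x ∈ Ioo q c, p x := by
  obtain ⟨q, hq, hsub⟩ :=
    (mem_nhdsLT_iff_exists_mem_Ico_Ioo_subset (add_div_two_lt_right.2 hac)).1 h
  exact ⟨q, ⟨(left_lt_add_div_two.2 hac).trans_le hq.1, hq.2⟩, hsub⟩

end OneSided

/-- Partial converse of Brin's Ubiquity theorem: if a subgroup `H` of `PL₀(I)` is
isomorphic to Thompson's group `F`, then `H` has an orbital `W = (a,c)` and an
element `h` which moves points arbitrarily close to one endpoint of `W` but fixes
pointwise a neighborhood (within `W`) of the other endpoint. -/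
theorem ubiquity_partial_converse (H : Subgroup (Equiv.Perm ℝ))
    (hH : ∀ f ∈ H, IsPL0 f) (hiso : Nonempty (ThompsonF ≃* H)) :
    ∃ a c : ℝ, IsSubgroupOrbital H a c ∧ ∃ h ∈ H,
      (((∀ ε > (0 : ℝ), ∃ x ∈ Set.Ioo a c, x < a + ε ∧ h x ≠ x) ∧
          (∃ q ∈ Set.Ioo a c, ∀ x ∈ Set.Ioo q c, h x = x)) ∨
        ((∀ ε > (0 : ℝ), ∃ x ∈ Set.Ioo a c, c - ε < x ∧ h x ≠ x) ∧
          (∃ q ∈ Set.Ioo a c, ∀ x ∈ Set.Ioo a q, h x = x))) := by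
  obtain ⟨θ⟩ := hiso
  set p0 : Equiv.Perm ℝ := ↑(θ (PresentedGroup.of 0))
  set p1 : Equiv.Perm ℝ := ↑(θ (PresentedGroup.of 1))
  have hp0 : p0 ∈ H := (θ _).2
  have hp1 : p1 ∈ H := (θ _).2
  have hpair : IsThompsonPair p0 p1 := isThompsonPair_of.map (H.subtype.comp θ.toMonoidHom)
  have hw : thompsonW p0 p1 ≠ 1 := thompsonW_ne_one fun h ↦ ThompsonF.not_commute_of <| by
    simpa using (show Commute (θ (PresentedGroup.of 0)) (θ (PresentedGroup.of 1)) from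
      Subtype.ext h.eq).map θ.symm
  obtain ⟨x, hx⟩ : ∃ x, thompsonW p0 p1 x ≠ x := by
    by_contra! h
    exact hw (Equiv.ext h)
  have hwH : thompsonW p0 p1 ∈ H :=
    H.mul_mem (H.inv_mem (thompsonGen_mem hp0 hp1 1)) (thompsonGen_mem hp0 hp1 2)
  obtain ⟨a, c, horb, hxac⟩ := exists_isSubgroupOrbital_mem hH ⟨_, hwH, hx⟩
  obtain ⟨h, hh, hne⟩ := horb.exists_not_eventually_fixed_nhdsGT_iff_nhdsLT hH hp0 hp1 hpair
    (closure_pair_eq_of_thompsonF_mulEquiv θ) hxac hx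
  refine ⟨a, c, horb, h, hh, ?_⟩
  by_cases hc : ∀ᶠ y in 𝓝[<] c, h y = y
  · have ha : ∃ᶠ y in 𝓝[>] a, h y ≠ y := not_eventually.1 fun ha ↦ hne (iff_of_true ha hc)
    exact .inl ⟨fun ε hε ↦ ha.exists_mem_Ioo_lt_add horb.1 hε,
      hc.exists_mem_Ioo_forall_Ioo_nhdsLT horb.1⟩
  · have ha : ∀ᶠ y in 𝓝[>] a, h y = y := by_contra fun ha ↦ hne (iff_of_false ha hc)
    exact .inr ⟨fun ε hε ↦ (not_eventually.1 hc).exists_mem_Ioo_sub_lt horb.1 hε,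
      ha.exists_mem_Ioo_forall_Ioo_nhdsGT horb.1⟩
end
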